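/- arXiv:0905.3098 — 10 statements merged into one kernel-verified Lean document; each statement's English description precedes it below -/
import Mathlib

section
/- Let (X,T) and (Y,S) be minimal topological dynamical systems on compact metric spaces, with (Y,S) distal. If X₁ is a nonempty T-invariant subset of X and Φ: X₁ → Y is continuous (with the induced topology) and satisfies Φ ∘ T = S ∘ Φ on X₁, then Φ extends to a continuous map Φ': X → Y with Φ' ∘ T = S ∘ Φ'. -/
/-! The extension is read off the closure `G` of the graph of `Φ` over `X₁`, a closed subset of
`X × Y` invariant under `T × S`. Since `X₁` contains a dense orbit, `G` projects onto `X`, and since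
`Y` is compact, `G` is the graph of a continuous map as soon as each fibre of `G` is a single point.
Continuity of `Φ` at a point `x₀ ∈ X₁` makes the fibres of `G` near `x₀` small; if the fibre over
`x` contained `y ≠ y'`, moving `x` near `x₀` along its dense orbit would bring `Sⁿ y` and `Sⁿ y'`
close together, contradicting distality. -/

open Filter Topology Set
open scoped Pointwise

namespace Equiv.Perm

variable {α β : Type*}

def prodCongrHom (α β : Type*) : Perm α × Perm β →* Perm (α × β) where
  toFun e := e.1.prodCongr e.2
  map_one' := rfl
  map_mul' _ _ := rfl

theorem prodCongr_zpow (e : Perm α) (f : Perm β) (n : ℤ) :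
    e.prodCongr f ^ n = (e ^ n).prodCongr (f ^ n) :=
  (map_zpow (prodCongrHom α β) (e, f) n).symm

theorem image_zpow_eq_of_image_eq {e : Perm α} {s : Set α} (h : e '' s = s) (n : ℤ) :
    ⇑(e ^ n) '' s = s := by
  have he : e ∈ MulAction.stabilizer (Perm α) s := by
    rw [MulAction.mem_stabilizer_iff, ← Set.image_smul]
    exact h
  have hen := zpow_mem he n
  rwa [MulAction.mem_stabilizer_iff, ← Set.image_smul] at hen

end Equiv.Perm

open Equiv

theorem Set.image_prodMap_graphOn {α β : Type*} {e : α → α} {f : β → β} {φ : α → β} {s : Set α}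
    (hs : e '' s = s) (h : ∀ x ∈ s, φ (e x) = f (φ x)) :
    Prod.map e f '' s.graphOn φ = s.graphOn φ :=
  calc Prod.map e f '' s.graphOn φ = (fun x => (e x, φ (e x))) '' s := by
        simp only [graphOn, image_image, Prod.map]
        exact image_congr fun x hx => by rw [h x hx]
    _ = (e '' s).graphOn φ := by rw [graphOn, image_image]
    _ = s.graphOn φ := by rw [hs]

theorem IsClosed.exists_continuous_eq_graphOn {X Y : Type*} [TopologicalSpace X]
    [TopologicalSpace Y] [CompactSpace Y] {G : Set (X × Y)} (hG : IsClosed G)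
    (hinj : InjOn Prod.fst G) (hfst : Prod.fst '' G = univ) :
    ∃ f : X → Y, Continuous f ∧ G = univ.graphOn f := by
  have hex (x : X) : ∃ y, (x, y) ∈ G := by
    obtain ⟨⟨_, y⟩, hy, rfl⟩ := hfst.symm ▸ mem_univ x
    exact ⟨y, hy⟩
  choose f hf using hex
  have hGf : G = univ.graphOn f := by
    ext ⟨x, y⟩
    simp only [mem_graphOn, mem_univ, true_and]
    exact ⟨fun h => congrArg Prod.snd (hinj (hf x) h rfl), fun h => h ▸ hf x⟩
  refine ⟨f, continuous_iff_isClosed.2 fun C hC => ?_, hGf⟩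
  have hpre : f ⁻¹' C = Prod.fst '' (G ∩ Prod.snd ⁻¹' C) := by
    rw [hGf]
    ext x
    simp
  rw [hpre]
  exact isClosedMap_fst_of_compactSpace _ (hG.inter (hC.preimage continuous_snd))

theorem ContinuousWithinAt.eventually_mem_of_mem_closure_graphOn {X Y : Type*}
    [TopologicalSpace X] [TopologicalSpace Y] {f : X → Y} {s : Set X} {x₀ : X}
    (hf : ContinuousWithinAt f s x₀) {V : Set Y} (hV : V ∈ 𝓝 (f x₀)) (hVc : IsClosed V) :
    ∀ᶠ x in 𝓝 x₀, ∀ y, (x, y) ∈ closure (s.graphOn f) → y ∈ V := by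
  obtain ⟨U, hUo, hx₀, hUV⟩ := mem_nhdsWithin.1 (hf hV)
  filter_upwards [hUo.mem_nhds hx₀] with x hx y hxy
  have hsub : U ×ˢ univ ∩ s.graphOn f ⊆ univ ×ˢ V := by
    rintro _ ⟨⟨hxU, -⟩, x', hx's, rfl⟩
    exact ⟨trivial, hUV ⟨hxU, hx's⟩⟩
  exact (closure_minimal hsub (isClosed_univ.prod hVc)
    ((hUo.prod isOpen_univ).inter_closure ⟨⟨hx, trivial⟩, hxy⟩)).2

theorem ContinuousWithinAt.eventually_dist_lt_of_mem_closure_graphOn {X Y : Type*}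
    [TopologicalSpace X] [PseudoMetricSpace Y] {f : X → Y} {s : Set X} {x₀ : X}
    (hf : ContinuousWithinAt f s x₀) {ε : ℝ} (hε : 0 < ε) :
    ∀ᶠ x in 𝓝 x₀, ∀ y y', (x, y) ∈ closure (s.graphOn f) → (x, y') ∈ closure (s.graphOn f) →
      dist y y' < ε := by
  filter_upwards [hf.eventually_mem_of_mem_closure_graphOn
    (Metric.closedBall_mem_nhds (f x₀) (by positivity : 0 < ε / 3)) Metric.isClosed_closedBall]
    with x hx y y' hy hy'
  calc dist y y' ≤ dist y (f x₀) + dist y' (f x₀) := dist_triangle_right _ _ _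
    _ ≤ ε / 3 + ε / 3 := add_le_add (hx y hy) (hx y' hy')
    _ < ε := by linarith

def IsDistal {Y : Type*} [PseudoMetricSpace Y] (S : Perm Y) : Prop :=
  ∀ y y' : Y, y ≠ y' → ∃ δ > 0, ∀ n : ℤ, δ ≤ dist ((S ^ n) y) ((S ^ n) y')

theorem IsDistal.injOn_fst {X Y : Type*} [TopologicalSpace X] [PseudoMetricSpace Y]
    {T : Perm X} {S : Perm Y} (hS : IsDistal S) {x₀ : X}
    (hT : ∀ x, x₀ ∈ closure (range fun n : ℤ => (T ^ n) x))
    {G : Set (X × Y)} (hG : Prod.map T S '' G = G)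
    (hshrink : ∀ ε > 0, ∀ᶠ x in 𝓝 x₀, ∀ y y', (x, y) ∈ G → (x, y') ∈ G → dist y y' < ε) :
    InjOn Prod.fst G := by
  rintro ⟨x, y⟩ hy ⟨x', y'⟩ hy' (rfl : x = x')
  by_contra hyy'
  obtain ⟨δ, hδ, hsep⟩ := hS y y' fun h => hyy' (by rw [h])
  obtain ⟨_, hU, m, rfl⟩ := mem_closure_iff_nhds.1 (hT x) _ (hshrink δ hδ)
  have hGm (p : X × Y) (hp : p ∈ G) : ((T ^ m) p.1, (S ^ m) p.2) ∈ G := by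
    rw [← Perm.image_zpow_eq_of_image_eq (e := T.prodCongr S) hG m, Perm.prodCongr_zpow]
    exact mem_image_of_mem _ hp
  exact (hsep m).not_gt (hU _ _ (hGm _ hy) (hGm _ hy'))

theorem extend_equivariant_map_general
    {X Y : Type*} [MetricSpace X] [MetricSpace Y] [CompactSpace Y]
    (T : X ≃ₜ X) (S : Y ≃ₜ Y)
    (hXmin : ∀ x : X, Dense (Set.range fun n : ℤ => (T.toEquiv ^ n) x))
    (hYdistal : ∀ y y' : Y, y ≠ y' →
      ∃ δ > 0, ∀ n : ℤ, δ ≤ dist ((S.toEquiv ^ n) y) ((S.toEquiv ^ n) y'))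
    (X₁ : Set X) (hne : X₁.Nonempty) (hinv : T '' X₁ = X₁)
    (Φ : X → Y) (hcont : ContinuousOn Φ X₁)
    (hcomm : ∀ x ∈ X₁, Φ (T x) = S (Φ x)) :
    ∃ Φ' : X → Y, Continuous Φ' ∧ (∀ x ∈ X₁, Φ' x = Φ x) ∧
      ∀ x : X, Φ' (T x) = S (Φ' x) := by
  obtain ⟨x₀, hx₀⟩ := hne
  set G := closure (X₁.graphOn Φ)
  have hG : Prod.map T S '' G = G := by
    rw [show Prod.map T S = T.prodCongr S from rfl, Homeomorph.image_closure]
    exact congrArg closure (image_prodMap_graphOn hinv hcomm)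
  have hdense : Dense X₁ := (hXmin x₀).mono <| range_subset_iff.2 fun n =>
    Perm.image_zpow_eq_of_image_eq hinv n ▸ mem_image_of_mem _ hx₀
  have hfst : Prod.fst '' G = univ := by
    rw [← isClosedMap_fst_of_compactSpace.closure_image_eq_of_continuous continuous_fst,
      image_fst_graphOn, hdense.closure_eq]
  obtain ⟨Φ', hΦ', hGΦ'⟩ := IsClosed.exists_continuous_eq_graphOn (G := G) isClosed_closure
    (IsDistal.injOn_fst hYdistal (fun x => hXmin x x₀) hG
      fun _ => (hcont x₀ hx₀).eventually_dist_lt_of_mem_closure_graphOn) hfst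
  refine ⟨Φ', hΦ', fun x hx => ?_, fun x => ?_⟩
  · have hxG : (x, Φ x) ∈ G := subset_closure (mem_image_of_mem _ hx)
    rw [hGΦ'] at hxG
    exact (mem_graphOn.1 hxG).2
  · have hxG : (x, Φ' x) ∈ G := hGΦ' ▸ mem_image_of_mem _ (mem_univ x)
    have hTxG := hG ▸ mem_image_of_mem (Prod.map T S) hxG
    rw [hGΦ'] at hTxG
    exact (mem_graphOn.1 hTxG).2

/-- Extension of continuous equivariant maps from invariant subsets, when the target
system is minimal and distal. -/
theorem extend_equivariant_map
    {X Y : Type*} [MetricSpace X] [CompactSpace X] [MetricSpace Y] [CompactSpace Y]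
    (T : X ≃ₜ X) (S : Y ≃ₜ Y)
    (hXmin : ∀ x : X, Dense (Set.range fun n : ℤ => (T.toEquiv ^ n) x))
    (hYmin : ∀ y : Y, Dense (Set.range fun n : ℤ => (S.toEquiv ^ n) y))
    (hYdistal : ∀ y y' : Y, y ≠ y' →
      ∃ δ > 0, ∀ n : ℤ, δ ≤ dist ((S.toEquiv ^ n) y) ((S.toEquiv ^ n) y'))
    (X₁ : Set X) (hne : X₁.Nonempty) (hinv : T '' X₁ = X₁)
    (Φ : X → Y) (hcont : ContinuousOn Φ X₁)
    (hcomm : ∀ x ∈ X₁, Φ (T x) = S (Φ x)) :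
    ∃ Φ' : X → Y, Continuous Φ' ∧ (∀ x ∈ X₁, Φ' x = Φ x) ∧
      ∀ x : X, Φ' (T x) = S (Φ' x) :=
  extend_equivariant_map_general T S hXmin hYdistal X₁ hne hinv Φ hcont hcomm
end

section
/- Let (X,T) be a topological dynamical system, d ≥ 1, and x,y ∈ X proximal points such that the closed orbit of y is a minimal set. Then the point (x, y, y, …, y) ∈ X^{2^d} (with x in the coordinate indexed by the empty set and y in all other coordinates) belongs to Q^[d](X), the closure in X^{2^d} of the set { (T^{n·ε} x : ε ∈ {0,1}^d) : x ∈ X, n ∈ ℤ^d }, where n·ε = Σᵢ nᵢεᵢ. -/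
open Filter Topology

noncomputable section

def dotP {d : ℕ} (n : Fin d → ℤ) (ε : Fin d → Bool) : ℤ :=
  ∑ i, if ε i then n i else 0

def vertex0 (d : ℕ) : Fin d → Bool := fun _ => false

def cubeQ (X : Type*) [TopologicalSpace X] (T : X ≃ₜ X) (d : ℕ) :
    Set ((Fin d → Bool) → X) :=
  closure {y | ∃ (x : X) (n : Fin d → ℤ), y = fun ε => (T.toEquiv ^ dotP n ε) x}


/-!
Minimality and proximality give, for every neighbourhood `U` of `y`, a single time `j` with both
`Tʲx` and `Tʲy` in `U`: cover the orbit closure of `y` by the open sets `T⁻ʲU`, take a Lebesgue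
number `η`, and apply it to a time `m` at which `Tᵐx` and `Tᵐy` are `η`-close. Since `Tʲy ∈ U`, the
set `U ∩ T⁻ʲU` is again a neighbourhood of `y`, and induction on `d` yields `n ∈ ℤᵈ` with
`T^{n·ε}x ∈ U` for all `ε ≠ 0`, which is the required approximation in `Q^[d](X)`.
-/

open Set

namespace Homeomorph

variable {X : Type*} [TopologicalSpace X]

theorem toEquiv_zpow (T : X ≃ₜ X) (n : ℤ) : (T ^ n).toEquiv = T.toEquiv ^ n :=
  map_zpow (⟨⟨toEquiv, rfl⟩, fun _ _ => rfl⟩ : (X ≃ₜ X) →* Equiv.Perm X) T n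

theorem continuous_toEquiv_zpow (T : X ≃ₜ X) (n : ℤ) : Continuous (T.toEquiv ^ n) := by
  rw [← toEquiv_zpow]
  exact (T ^ n).continuous

end Homeomorph

@[simp]
theorem dotP_vertex0 {d : ℕ} (n : Fin d → ℤ) : dotP n (vertex0 d) = 0 := by
  simp [dotP, vertex0]

theorem dotP_cons_cons {d : ℕ} (j : ℤ) (n : Fin d → ℤ) (b : Bool) (τ : Fin d → Bool) :
    dotP (Fin.cons j n : Fin (d + 1) → ℤ) (Fin.cons b τ) = (if b then j else 0) + dotP n τ := by
  simp [dotP, Fin.sum_univ_succ]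

theorem vertex0_succ (d : ℕ) : vertex0 (d + 1) = Fin.cons false (vertex0 d) := by
  ext i
  cases i using Fin.cases <;> rfl

theorem exists_zpow_mem_of_proximal_of_minimal {X : Type*} [MetricSpace X] [CompactSpace X]
    (T : X ≃ₜ X) {x y : X}
    (hprox : ∀ δ > 0, ∃ n : ℤ, dist ((T.toEquiv ^ n) x) ((T.toEquiv ^ n) y) < δ)
    (hmin : ∀ z ∈ closure (range fun n : ℤ => (T.toEquiv ^ n) y),
      y ∈ closure (range fun n : ℤ => (T.toEquiv ^ n) z))
    {U : Set X} (hU : U ∈ 𝓝 y) : ∃ n : ℤ, (T.toEquiv ^ n) x ∈ U ∧ (T.toEquiv ^ n) y ∈ U := by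
  have hcover : closure (range fun n : ℤ => (T.toEquiv ^ n) y) ⊆
      ⋃ j : ℤ, (T.toEquiv ^ j) ⁻¹' interior U := fun z hz => by
    obtain ⟨_, hj, j, rfl⟩ :=
      mem_closure_iff.1 (hmin z hz) _ isOpen_interior (mem_interior_iff_mem_nhds.2 hU)
    exact mem_iUnion.2 ⟨j, hj⟩
  obtain ⟨η, hη, hball⟩ := lebesgue_number_lemma_of_metric isClosed_closure.isCompact
    (fun j => isOpen_interior.preimage (T.continuous_toEquiv_zpow j)) hcover
  obtain ⟨m, hm⟩ := hprox η hη
  obtain ⟨j, hj⟩ := hball _ (subset_closure ⟨m, rfl⟩)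
  have hx : (T.toEquiv ^ m) x ∈ Metric.ball ((T.toEquiv ^ m) y) η := hm
  refine ⟨j + m, ?_, ?_⟩ <;> rw [zpow_add, Equiv.Perm.mul_apply] <;> apply interior_subset
  · exact hj hx
  · exact hj (Metric.mem_ball_self hη)

theorem exists_dotP_mem_of_forall_nhds {X : Type*} [TopologicalSpace X] (T : X ≃ₜ X) {x y : X}
    (hxy : ∀ U ∈ 𝓝 y, ∃ j : ℤ, (T.toEquiv ^ j) x ∈ U ∧ (T.toEquiv ^ j) y ∈ U) (d : ℕ)
    {U : Set X} (hU : U ∈ 𝓝 y) : ∃ n : Fin d → ℤ, ∀ ε ≠ vertex0 d,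
      (T.toEquiv ^ dotP n ε) x ∈ U ∧ (T.toEquiv ^ dotP n ε) y ∈ U := by
  induction d generalizing U with
  | zero => exact ⟨Fin.elim0, fun ε hε => (hε (Subsingleton.elim _ _)).elim⟩
  | succ d ih =>
    obtain ⟨j, hjx, hjy⟩ := hxy _ (interior_mem_nhds.2 hU)
    have hV : U ∩ (T.toEquiv ^ j) ⁻¹' interior U ∈ 𝓝 y :=
      inter_mem hU ((isOpen_interior.preimage (T.continuous_toEquiv_zpow j)).mem_nhds hjy)
    obtain ⟨n, hn⟩ := ih hV
    refine ⟨Fin.cons j n, Fin.consCases fun b τ hbτ => ?_⟩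
    rw [dotP_cons_cons]
    by_cases hτ : τ = vertex0 d
    · have hb : b = true := by
        by_contra hb
        exact hbτ (by rw [vertex0_succ, hτ, Bool.eq_false_iff.2 hb])
      subst hτ hb
      simpa using ⟨interior_subset hjx, interior_subset hjy⟩
    · have hshift : ∀ p ∈ U ∩ (T.toEquiv ^ j) ⁻¹' interior U, (T.toEquiv ^ j) p ∈ U :=
        fun p hp => interior_subset hp.2
      cases b <;> simp only [Bool.false_eq_true, if_true, if_false, zero_add, zpow_add,
        Equiv.Perm.mul_apply]
      · exact (hn τ hτ).imp (·.1) (·.1)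
      · exact (hn τ hτ).imp (hshift _) (hshift _)

theorem mem_cubeQ_of_forall_nhds {X : Type*} [TopologicalSpace X] (T : X ≃ₜ X) {d : ℕ} {x y : X}
    (h : ∀ U ∈ 𝓝 y, ∃ n : Fin d → ℤ, ∀ ε ≠ vertex0 d, (T.toEquiv ^ dotP n ε) x ∈ U) :
    (fun ε => if ε = vertex0 d then x else y) ∈ cubeQ X T d := by
  refine mem_closure_iff_nhds.2 fun W hW => ?_
  rw [nhds_pi, Filter.mem_pi'] at hW
  obtain ⟨I, t, ht, htW⟩ := hW
  have hU : (⋂ ε ∈ {ε | ε ≠ vertex0 d}, t ε) ∈ 𝓝 y :=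
    (biInter_mem (toFinite _)).2 fun ε hε => by simpa [if_neg hε] using ht ε
  obtain ⟨n, hn⟩ := h _ hU
  refine ⟨_, htW fun ε _ => ?_, x, n, rfl⟩
  by_cases hε : ε = vertex0 d
  · subst hε
    simpa using mem_of_mem_nhds (ht (vertex0 d))
  · exact mem_iInter₂.1 (hn ε hε) ε hε

theorem proximal_point_in_cubeQ_general
    {X : Type*} [MetricSpace X] [CompactSpace X] (T : X ≃ₜ X) (d : ℕ)
    (x y : X)
    (hprox : ∀ δ > 0, ∀ N : ℕ, ∃ n : ℕ, N ≤ n ∧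
      dist ((T.toEquiv ^ (n : ℤ)) x) ((T.toEquiv ^ (n : ℤ)) y) < δ)
    (hmin : ∀ z ∈ closure (Set.range fun n : ℤ => (T.toEquiv ^ n) y),
      closure (Set.range fun n : ℤ => (T.toEquiv ^ n) y) ⊆
        closure (Set.range fun n : ℤ => (T.toEquiv ^ n) z)) :
    (fun ε : Fin d → Bool => if ε = vertex0 d then x else y) ∈ cubeQ X T d := by
  have hreturn : ∀ U ∈ 𝓝 y, ∃ j : ℤ, (T.toEquiv ^ j) x ∈ U ∧ (T.toEquiv ^ j) y ∈ U :=
    fun U hU => exists_zpow_mem_of_proximal_of_minimal T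
      (fun δ hδ => let ⟨n, _, hn⟩ := hprox δ hδ 0; ⟨n, hn⟩)
      (fun z hz => hmin z hz (subset_closure ⟨0, rfl⟩)) hU
  exact mem_cubeQ_of_forall_nhds T fun U hU =>
    (exists_dotP_mem_of_forall_nhds T hreturn d hU).imp fun _ hn ε hε => (hn ε hε).1

/-- If `x` and `y` are proximal and the closed orbit of `y` is minimal, then
`(x, y, …, y) ∈ Q^[d](X)`. -/
theorem proximal_point_in_cubeQ
    {X : Type*} [MetricSpace X] [CompactSpace X] (T : X ≃ₜ X) (d : ℕ) (hd : 1 ≤ d)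
    (x y : X)
    (hprox : ∀ δ > 0, ∀ N : ℕ, ∃ n : ℕ, N ≤ n ∧
      dist ((T.toEquiv ^ (n : ℤ)) x) ((T.toEquiv ^ (n : ℤ)) y) < δ)
    (hmin : ∀ z ∈ closure (Set.range fun n : ℤ => (T.toEquiv ^ n) y),
      closure (Set.range fun n : ℤ => (T.toEquiv ^ n) y) ⊆
        closure (Set.range fun n : ℤ => (T.toEquiv ^ n) z)) :
    (fun ε : Fin d → Bool => if ε = vertex0 d then x else y) ∈ cubeQ X T d :=
  proximal_point_in_cubeQ_general T d x y hprox hmin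
end
end

section
/- Let π: (X,T) → (Y,S) be a factor map of topological dynamical systems (π continuous, surjective, π∘T = S∘π) and d ≥ 1. Then Q^[d](Y) is the image of Q^[d](X) under the product map π^{[d]} = π × … × π (2^d times). -/
open Filter Topology

noncomputable section

/-!
A factor map commutes with all integer powers of the two transformations, so `π^{[d]}` maps the
set of cubes `(T^{n·ε} x)_ε` onto the set of cubes `(S^{n·ε} y)_ε` (using surjectivity of `π`).
Since `π^{[d]}` is a continuous map from a compact space to a Hausdorff space, it is closed and
therefore commutes with taking closures.
-/

theorem Function.Semiconj.perm_zpow {X Y : Type*} {π : X → Y} {T : Equiv.Perm X}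
    {S : Equiv.Perm Y} (h : Function.Semiconj π T S) (k : ℤ) :
    Function.Semiconj π ⇑(T ^ k) ⇑(S ^ k) := by
  have h_pow (n : ℕ) : Function.Semiconj π ⇑(T ^ n) ⇑(S ^ n) := by
    simpa only [Equiv.Perm.coe_pow] using h.iterate_right n
  cases k with
  | ofNat n => exact h_pow n
  | negSucc n =>
    rw [zpow_negSucc, zpow_negSucc]
    exact (h_pow (n + 1)).inverses_right (T ^ (n + 1)).apply_symm_apply
      (S ^ (n + 1)).symm_apply_apply

def cubePoints {X : Type*} (T : Equiv.Perm X) (d : ℕ) : Set ((Fin d → Bool) → X) :=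
  {y | ∃ (x : X) (n : Fin d → ℤ), y = fun ε => (T ^ dotP n ε) x}

theorem cubeQ_eq_closure_cubePoints (X : Type*) [TopologicalSpace X] (T : X ≃ₜ X) (d : ℕ) :
    cubeQ X T d = closure (cubePoints T.toEquiv d) :=
  rfl

theorem image_cubePoints_of_semiconj {X Y : Type*} {π : X → Y} {T : Equiv.Perm X}
    {S : Equiv.Perm Y} (h : Function.Semiconj π T S) (hπ : Function.Surjective π) (d : ℕ) :
    (fun u : (Fin d → Bool) → X => π ∘ u) '' cubePoints T d = cubePoints S d := by
  ext v
  constructor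
  · rintro ⟨u, ⟨x, n, rfl⟩, rfl⟩
    exact ⟨π x, n, funext fun ε => h.perm_zpow _ x⟩
  · rintro ⟨y, n, rfl⟩
    obtain ⟨x, rfl⟩ := hπ y
    exact ⟨_, ⟨x, n, rfl⟩, funext fun ε => h.perm_zpow _ x⟩

theorem cubeQ_image_of_factor_general
    {X Y : Type*} [MetricSpace X] [CompactSpace X] [MetricSpace Y]
    (T : X ≃ₜ X) (S : Y ≃ₜ Y) (π : X → Y)
    (hπcont : Continuous π) (hπsurj : Function.Surjective π)
    (hπcomm : ∀ x : X, π (T x) = S (π x)) (d : ℕ) :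
    cubeQ Y S d = (fun u : (Fin d → Bool) → X => π ∘ u) '' cubeQ X T d := by
  have hcube_cont : Continuous fun u : (Fin d → Bool) → X => π ∘ u :=
    continuous_pi fun ε => hπcont.comp (continuous_apply ε)
  rw [cubeQ_eq_closure_cubePoints, cubeQ_eq_closure_cubePoints,
    ← image_cubePoints_of_semiconj (T := T.toEquiv) hπcomm hπsurj d]
  exact hcube_cont.isClosedMap.closure_image_eq_of_continuous hcube_cont _

/-- `Q^[d](Y)` is the image of `Q^[d](X)` under a factor map. -/
theorem cubeQ_image_of_factor
    {X Y : Type*} [MetricSpace X] [CompactSpace X] [MetricSpace Y] [CompactSpace Y]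
    (T : X ≃ₜ X) (S : Y ≃ₜ Y) (π : X → Y)
    (hπcont : Continuous π) (hπsurj : Function.Surjective π)
    (hπcomm : ∀ x : X, π (T x) = S (π x)) (d : ℕ) :
    cubeQ Y S d = (fun u : (Fin d → Bool) → X => π ∘ u) '' cubeQ X T d :=
  cubeQ_image_of_factor_general T S π hπcont hπsurj hπcomm d
end
end

section
/- Let (X,T) be a minimal distal system and d ≥ 1. Define a relation ∼ on Q^[d-1](X) by x ∼ x' iff the concatenated point (x, x') ∈ X^{2^d} belongs to Q^[d](X). Then ∼ is an equivalence relation. -/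
open Filter Topology

noncomputable section

/-- The point of `X^{2^{m+1}}` whose restriction to `{ε : ε_{m+1} = 0}` is `u` and to
`{ε : ε_{m+1} = 1}` is `v`. -/
def concat {X : Type*} {m : ℕ} (u v : (Fin m → Bool) → X) : (Fin (m + 1) → Bool) → X :=
  fun ε => if ε (Fin.last m) then v (fun i => ε i.castSucc) else u (fun i => ε i.castSucc)

/-!
Elements of the enveloping semigroup `E` of the cube group `G^[d]` act vertex by vertex, and
distality makes them injective, so `E` is a group. By minimality `Q^[d] = E · x₀^[d]` for any
`x₀`. If `(u, v) = p · x₀^[d+1]` and `(v, w) = q · x₀^[d+1]`, let `k` be the inverse of the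
action of `q` on lower faces; then `q ∘ (k × k) ∘ p` sends `x₀^[d+1]` to `(u, w)`. Reflexivity
and symmetry hold in any system: `a ↦ (a, a)` and `(a, b) ↦ (b, a)` preserve the generators
of `Q`.
-/

open Function Set

abbrev Cube (X : Type*) (d : ℕ) : Type _ := (Fin d → Bool) → X

section Faces

variable {X : Type*} {m : ℕ}

def lowerFace (y : Cube X (m + 1)) : Cube X m :=
  fun ε => y (Fin.snoc ε false)

def upperFace (y : Cube X (m + 1)) : Cube X m :=
  fun ε => y (Fin.snoc ε true)

@[simp]
lemma lowerFace_concat (u v : Cube X m) : lowerFace (concat u v) = u := by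
  funext ε
  simp [lowerFace, concat]

@[simp]
lemma upperFace_concat (u v : Cube X m) : upperFace (concat u v) = v := by
  funext ε
  simp [upperFace, concat]

lemma concat_lowerFace_upperFace (y : Cube X (m + 1)) :
    concat (lowerFace y) (upperFace y) = y := by
  funext ε
  rw [← Fin.snoc_init_self ε]
  cases ε (Fin.last m) <;> simp [lowerFace, upperFace, concat]

lemma eq_of_faces_eq {y y' : Cube X (m + 1)} (hl : lowerFace y = lowerFace y')
    (hu : upperFace y = upperFace y') : y = y' := by
  rw [← concat_lowerFace_upperFace y, ← concat_lowerFace_upperFace y', hl, hu]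

variable [TopologicalSpace X]

lemma continuous_lowerFace : Continuous (lowerFace : (Cube X (m + 1)) → _) :=
  continuous_pi fun _ => continuous_apply _

lemma continuous_upperFace : Continuous (upperFace : (Cube X (m + 1)) → _) :=
  continuous_pi fun _ => continuous_apply _

lemma Continuous.concat {Z : Type*} [TopologicalSpace Z] {f g : Z → Cube X m}
    (hf : Continuous f) (hg : Continuous g) : Continuous fun z => concat (f z) (g z) := by
  refine continuous_pi fun ε => ?_
  unfold _root_.concat
  split_ifs
  · exact (continuous_apply _).comp hg
  · exact (continuous_apply _).comp hf

end Faces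

lemma dotP_add {d : ℕ} (n n' : Fin d → ℤ) (ε : Fin d → Bool) :
    dotP (n + n') ε = dotP n ε + dotP n' ε := by
  simp only [dotP, ← Finset.sum_add_distrib, Pi.add_apply]
  exact Finset.sum_congr rfl fun i _ => by split_ifs <;> simp

@[simp]
lemma dotP_zero {d : ℕ} (ε : Fin d → Bool) : dotP 0 ε = 0 := by
  simp [dotP]

@[simp]
lemma dotP_snoc_snoc {d : ℕ} (n : Fin d → ℤ) (k : ℤ) (ε : Fin d → Bool) (b : Bool) :
    dotP (Fin.snoc n k) (Fin.snoc ε b) = dotP n ε + if b then k else 0 := by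
  simp [dotP, Fin.sum_univ_castSucc]

lemma Homeomorph.continuous_toEquiv_zpow_s6 {X : Type*} [TopologicalSpace X] (T : X ≃ₜ X) (k : ℤ) :
    Continuous ⇑(T.toEquiv ^ k) := by
  have : T.toEquiv ^ k = (T ^ k).toEquiv :=
    (map_zpow (MonoidHom.mk' (fun f : X ≃ₜ X => f.toEquiv) fun _ _ => rfl) T k).symm
  rw [this]
  exact (T ^ k).continuous

lemma comp_mem_closure {Y : Type*} [TopologicalSpace Y] {S : Set (Y → Y)}
    (hcont : ∀ f ∈ S, Continuous f) (hS : ∀ f ∈ S, ∀ g ∈ S, f ∘ g ∈ S) {p q : Y → Y}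
    (hp : p ∈ closure S) (hq : q ∈ closure S) : p ∘ q ∈ closure S := by
  have hSq : ∀ f ∈ S, f ∘ q ∈ closure S := fun f hf =>
    map_mem_closure (continuous_pi fun y => (hcont f hf).comp (continuous_apply y)) hq
      fun g hg => hS f hf g hg
  have := map_mem_closure (f := (· ∘ q)) (continuous_pi fun y => continuous_apply (q y)) hp hSq
  rwa [closure_closure] at this

/-- In a compact semigroup of injective self-maps every element is invertible: the left ideal
`E ∘ p` contains an idempotent, and an injective idempotent is the identity. -/
lemma exists_inverse_of_isCompact {Y : Type*} [TopologicalSpace Y] [T2Space Y] {E : Set (Y → Y)}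
    (hE : IsCompact E) (hcomp : ∀ p ∈ E, ∀ q ∈ E, p ∘ q ∈ E) (hinj : ∀ p ∈ E, Injective p)
    {p : Y → Y} (hp : p ∈ E) : ∃ q ∈ E, q ∘ p = id ∧ p ∘ q = id := by
  have hleft : ∀ p ∈ E, ∃ q ∈ E, q ∘ p = id := by
    intro p hp
    let : TopologicalSpace (Function.End Y) := Pi.topologicalSpace
    have : T2Space (Function.End Y) := Pi.t2Space
    obtain ⟨_, ⟨q, hq, rfl⟩, hidem⟩ := exists_idempotent_in_compact_subsemigroup
      (M := Function.End Y) (fun r => continuous_pi fun y => continuous_apply (r y))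
      ((· ∘ p) '' E) ⟨_, p, hp, rfl⟩ (hE.image (continuous_pi fun y => continuous_apply (p y)))
      (by rintro _ ⟨a, ha, rfl⟩ _ ⟨b, hb, rfl⟩
          exact ⟨a ∘ p ∘ b, hcomp a ha _ (hcomp p hp b hb), rfl⟩)
    exact ⟨q, hq, funext fun y => hinj _ (hcomp q hq p hp) (congrFun hidem y)⟩
  obtain ⟨q, hq, hqp⟩ := hleft p hp
  obtain ⟨r, -, hrq⟩ := hleft q hq
  have hrp : r = p := by rw [← comp_id r, ← hqp, ← comp_assoc, hrq, id_comp]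
  exact ⟨q, hq, hqp, hrp ▸ hrq⟩

section CubeTransformations

variable {X : Type*} [TopologicalSpace X] (T : X ≃ₜ X)

/-- The elements of the Host–Kra cube group `G^[d]`: `T^{n₀}` on every vertex composed with the
face transformations `T^{n_i}` on the faces `{ε_i = 1}`. -/
def cubeTransf {d : ℕ} (n₀ : ℤ) (n : Fin d → ℤ) : Cube X d → Cube X d :=
  fun y ε => (T.toEquiv ^ (n₀ + dotP n ε)) (y ε)

/-- The enveloping (Ellis) semigroup of `G^[d]` acting on `X^{2^d}`. -/
def cubeEllis (d : ℕ) : Set (Cube X d → Cube X d) :=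
  closure {f | ∃ n₀ n, cubeTransf T n₀ n = f}

variable {T}

@[simp]
lemma cubeTransf_apply {d : ℕ} (n₀ : ℤ) (n : Fin d → ℤ) (y : Cube X d)
    (ε : Fin d → Bool) : cubeTransf T n₀ n y ε = (T.toEquiv ^ (n₀ + dotP n ε)) (y ε) :=
  rfl

lemma continuous_cubeTransf {d : ℕ} (n₀ : ℤ) (n : Fin d → ℤ) : Continuous (cubeTransf T n₀ n) :=
  continuous_pi fun ε => (T.continuous_toEquiv_zpow_s6 _).comp (continuous_apply ε)

lemma cubeTransf_comp {d : ℕ} (a b : ℤ) (n n' : Fin d → ℤ) :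
    cubeTransf T a n ∘ cubeTransf T b n' = cubeTransf T (a + b) (n + n') := by
  funext y ε
  simp only [cubeTransf, comp_apply, ← Equiv.Perm.mul_apply, ← zpow_add, dotP_add]
  ring_nf

lemma cubeTransf_mem_cubeEllis {d : ℕ} (n₀ : ℤ) (n : Fin d → ℤ) :
    cubeTransf T n₀ n ∈ cubeEllis T d :=
  subset_closure ⟨n₀, n, rfl⟩

lemma comp_mem_cubeEllis {d : ℕ} {p q : Cube X d → Cube X d}
    (hp : p ∈ cubeEllis T d) (hq : q ∈ cubeEllis T d) : p ∘ q ∈ cubeEllis T d :=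
  comp_mem_closure (by rintro _ ⟨n₀, n, rfl⟩; exact continuous_cubeTransf n₀ n)
    (by rintro _ ⟨a, n, rfl⟩ _ ⟨b, n', rfl⟩; exact ⟨a + b, n + n', (cubeTransf_comp a b n n').symm⟩)
    hp hq

lemma isCompact_cubeEllis [CompactSpace X] (d : ℕ) : IsCompact (cubeEllis T d) :=
  isClosed_closure.isCompact

lemma cubeEllis_apply_congr [T2Space X] {d : ℕ} {p : Cube X d → Cube X d}
    (hp : p ∈ cubeEllis T d) {y y' : Cube X d} {ε : Fin d → Bool} (h : y ε = y' ε) :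
    p y ε = p y' ε := by
  refine closure_minimal (t := {p | p y ε = p y' ε}) ?_ ?_ hp
  · rintro _ ⟨n₀, n, rfl⟩
    simp [cubeTransf, h]
  · exact isClosed_eq ((continuous_apply ε).comp (continuous_apply y))
      ((continuous_apply ε).comp (continuous_apply y'))

lemma injective_of_mem_cubeEllis {X : Type*} [MetricSpace X] {T : X ≃ₜ X}
    (hdistal : ∀ x y : X, x ≠ y →
      ∃ δ > 0, ∀ n : ℤ, δ ≤ dist ((T.toEquiv ^ n) x) ((T.toEquiv ^ n) y))
    {d : ℕ} {p : Cube X d → Cube X d} (hp : p ∈ cubeEllis T d) :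
    Injective p := by
  intro y y' hyy'
  by_contra hne
  obtain ⟨ε, hε⟩ := Function.ne_iff.mp hne
  obtain ⟨δ, hδ, hsep⟩ := hdistal _ _ hε
  have hsep' : δ ≤ dist (p y ε) (p y' ε) := by
    refine closure_minimal (t := {p | δ ≤ dist (p y ε) (p y' ε)}) ?_ ?_ hp
    · rintro _ ⟨n₀, n, rfl⟩
      exact hsep _
    · exact isClosed_le continuous_const (by fun_prop)
  rw [hyy', dist_self] at hsep'
  linarith

end CubeTransformations

section EllisFaces

variable {X : Type*} [TopologicalSpace X] {T : X ≃ₜ X} {m : ℕ}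

@[simp]
lemma lowerFace_cubeTransf_snoc (n₀ k : ℤ) (n : Fin m → ℤ) (y : Cube X (m + 1)) :
    lowerFace (cubeTransf T n₀ (Fin.snoc n k) y) = cubeTransf T n₀ n (lowerFace y) := by
  funext ε
  simp [lowerFace, cubeTransf]

@[simp]
lemma upperFace_cubeTransf_snoc (n₀ k : ℤ) (n : Fin m → ℤ) (y : Cube X (m + 1)) :
    upperFace (cubeTransf T n₀ (Fin.snoc n k) y) = cubeTransf T (n₀ + k) n (upperFace y) := by
  funext ε
  simp only [upperFace, cubeTransf, dotP_snoc_snoc, if_true]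
  ring_nf

def lowerRestrict (p : Cube X (m + 1) → Cube X (m + 1)) :
    Cube X m → Cube X m :=
  fun a => lowerFace (p (concat a a))

def doubled (p : Cube X m → Cube X m) :
    Cube X (m + 1) → Cube X (m + 1) :=
  fun y => concat (p (lowerFace y)) (p (upperFace y))

lemma lowerRestrict_mem_cubeEllis {p : Cube X (m + 1) → Cube X (m + 1)}
    (hp : p ∈ cubeEllis T (m + 1)) : lowerRestrict p ∈ cubeEllis T m := by
  refine map_mem_closure (f := lowerRestrict) ?_ hp ?_
  · exact continuous_pi fun a => continuous_lowerFace.comp (continuous_apply _)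
  · rintro _ ⟨n₀, n, rfl⟩
    cases n using Fin.snocCases with
    | snoc n k => exact ⟨n₀, n, funext fun a => by simp [lowerRestrict]⟩

lemma doubled_mem_cubeEllis {p : Cube X m → Cube X m}
    (hp : p ∈ cubeEllis T m) : doubled p ∈ cubeEllis T (m + 1) := by
  refine map_mem_closure (f := doubled) ?_ hp ?_
  · exact continuous_pi fun y => ((continuous_apply _).concat (continuous_apply _))
  · rintro _ ⟨n₀, n, rfl⟩
    exact ⟨n₀, Fin.snoc n 0, funext fun y => eq_of_faces_eq (by simp [doubled])
      (by simp [doubled])⟩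

/-- Elements of the enveloping semigroup act vertexwise, hence facewise. -/
lemma cubeEllis_apply_concat [T2Space X]
    {p : Cube X (m + 1) → Cube X (m + 1)}
    (hp : p ∈ cubeEllis T (m + 1)) (a b : Cube X m) :
    p (concat a b) = concat (lowerRestrict p a) (upperFace (p (concat b b))) := by
  refine eq_of_faces_eq ?_ ?_
  · rw [lowerFace_concat]
    funext ε
    exact cubeEllis_apply_congr hp (by simp [concat])
  · rw [upperFace_concat]
    funext ε
    exact cubeEllis_apply_congr hp (by simp [concat])

end EllisFaces

section Cubes

variable {X : Type*} [TopologicalSpace X] {T : X ≃ₜ X}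

lemma cubeQ_eq_image_cubeEllis [CompactSpace X] [T2Space X]
    (hmin : ∀ x : X, Dense (Set.range fun n : ℤ => (T.toEquiv ^ n) x)) (x₀ : X) (d : ℕ) :
    cubeQ X T d = (fun p => p fun _ => x₀) '' cubeEllis T d := by
  have hclosed : IsClosed ((fun p => p fun _ => x₀) '' cubeEllis T d) :=
    ((isCompact_cubeEllis d).image (continuous_apply _)).isClosed
  refine Subset.antisymm (closure_minimal ?_ hclosed) ?_
  · rintro _ ⟨x, n, rfl⟩
    have hdiag : (fun _ => x) ∈ (fun p => p fun _ => x₀) '' cubeEllis T d := by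
      refine closure_minimal ?_ hclosed
        (map_mem_closure (continuous_pi fun _ => continuous_id) (hmin x₀ x) (mapsTo_image _ _))
      rintro _ ⟨_, ⟨k, rfl⟩, rfl⟩
      exact ⟨cubeTransf T k 0, cubeTransf_mem_cubeEllis k 0, funext fun ε => by simp⟩
    obtain ⟨p, hp, hpx : p (fun _ => x₀) = fun _ => x⟩ := hdiag
    refine ⟨cubeTransf T 0 n ∘ p, comp_mem_cubeEllis (cubeTransf_mem_cubeEllis 0 n) hp, ?_⟩
    funext ε
    simp [hpx]
  · rintro _ ⟨p, hp, rfl⟩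
    refine map_mem_closure (f := fun p => p fun _ => x₀) (continuous_apply _) hp ?_
    rintro _ ⟨n₀, n, rfl⟩
    refine ⟨(T.toEquiv ^ n₀) x₀, n, funext fun ε => ?_⟩
    simp [← Equiv.Perm.mul_apply, ← zpow_add, add_comm]

variable {m : ℕ}

@[simp]
lemma lowerFace_zpow_dotP_snoc (x : X) (n : Fin m → ℤ) (k : ℤ) :
    lowerFace (fun ε => (T.toEquiv ^ dotP (Fin.snoc n k) ε) x) =
      fun ε => (T.toEquiv ^ dotP n ε) x := by
  funext ε
  simp [lowerFace]

@[simp]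
lemma upperFace_zpow_dotP_snoc (x : X) (n : Fin m → ℤ) (k : ℤ) :
    upperFace (fun ε => (T.toEquiv ^ dotP (Fin.snoc n k) ε) x) =
      fun ε => (T.toEquiv ^ dotP n ε) ((T.toEquiv ^ k) x) := by
  funext ε
  simp [upperFace, ← Equiv.Perm.mul_apply, ← zpow_add]

lemma concat_self_mem_cubeQ {u : Cube X m} (hu : u ∈ cubeQ X T m) :
    concat u u ∈ cubeQ X T (m + 1) := by
  refine map_mem_closure (f := fun a => concat a a) (continuous_id.concat continuous_id) hu ?_
  rintro _ ⟨x, n, rfl⟩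
  exact ⟨x, Fin.snoc n 0, eq_of_faces_eq (by simp) (by simp)⟩

lemma concat_mem_cubeQ_symm {u v : Cube X m} (h : concat u v ∈ cubeQ X T (m + 1)) :
    concat v u ∈ cubeQ X T (m + 1) := by
  have hswap : (fun y => concat (upperFace y) (lowerFace y)) (concat u v) ∈ cubeQ X T (m + 1) :=
    map_mem_closure (f := fun y => concat (upperFace y) (lowerFace y))
      (continuous_upperFace.concat continuous_lowerFace) h ?_
  · simpa using hswap
  rintro _ ⟨x, n, rfl⟩
  cases n using Fin.snocCases with
  | snoc n k =>
    exact ⟨(T.toEquiv ^ k) x, Fin.snoc n (-k), eq_of_faces_eq (by simp) (by simp)⟩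

end Cubes

lemma concat_mem_cubeQ_trans {X : Type*} [MetricSpace X] [CompactSpace X] {T : X ≃ₜ X} {m : ℕ}
    (hmin : ∀ x : X, Dense (Set.range fun n : ℤ => (T.toEquiv ^ n) x))
    (hdistal : ∀ x y : X, x ≠ y →
      ∃ δ > 0, ∀ n : ℤ, δ ≤ dist ((T.toEquiv ^ n) x) ((T.toEquiv ^ n) y))
    {u v w : Cube X m} (huv : concat u v ∈ cubeQ X T (m + 1))
    (hvw : concat v w ∈ cubeQ X T (m + 1)) : concat u w ∈ cubeQ X T (m + 1) := by
  set x₀ := u fun _ => false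
  rw [cubeQ_eq_image_cubeEllis hmin x₀] at huv hvw ⊢
  obtain ⟨p, hp, hpx⟩ := huv
  obtain ⟨q, hq, hqx⟩ := hvw
  have hconst : (fun _ => x₀ : Cube X (m + 1)) = concat (fun _ => x₀) (fun _ => x₀) :=
    funext fun ε => by simp [concat]
  obtain ⟨k, hk, hkq, hqk⟩ := exists_inverse_of_isCompact (isCompact_cubeEllis m)
    (fun _ h _ h' => comp_mem_cubeEllis h h') (fun _ h => injective_of_mem_cubeEllis hdistal h)
    (lowerRestrict_mem_cubeEllis hq)
  have hkv : k v = fun _ => x₀ := by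
    have : lowerRestrict q (fun _ => x₀) = v := by simp [lowerRestrict, ← hconst, hqx]
    rw [← this, ← comp_apply (f := k), hkq, id]
  -- `q ∘ (k × k) ∘ p` sends the base point to `(lowerRestrict q (k u), upperFace (q x₀)) = (u, w)`.
  refine ⟨q ∘ doubled k ∘ p,
    comp_mem_cubeEllis hq (comp_mem_cubeEllis (doubled_mem_cubeEllis hk) hp), ?_⟩
  simp only [comp_apply, hpx, doubled, lowerFace_concat, upperFace_concat, hkv,
    cubeEllis_apply_concat hq, ← hconst, hqx]
  rw [← comp_apply (f := lowerRestrict q), hqk, id]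

/-- In a minimal distal system, the relation `u ∼ v ⟺ (u,v) ∈ Q^[d]` on `Q^[d-1]`
is an equivalence relation (here `d = m + 1 ≥ 1`). -/
theorem cubeQ_concat_equivalence
    {X : Type*} [MetricSpace X] [CompactSpace X] (T : X ≃ₜ X) (m : ℕ)
    (hmin : ∀ x : X, Dense (Set.range fun n : ℤ => (T.toEquiv ^ n) x))
    (hdistal : ∀ x y : X, x ≠ y →
      ∃ δ > 0, ∀ n : ℤ, δ ≤ dist ((T.toEquiv ^ n) x) ((T.toEquiv ^ n) y)) :
    Equivalence (fun u v : {p // p ∈ cubeQ X T m} =>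
      concat u.1 v.1 ∈ cubeQ X T (m + 1)) :=
  ⟨fun u => concat_self_mem_cubeQ u.2, concat_mem_cubeQ_symm,
    concat_mem_cubeQ_trans hmin hdistal⟩
end
end

section
/- Let (X,T) be a minimal distal system and d ≥ 1. Suppose points x_ε ∈ X are given for all ε ⊊ [d] such that for each j ∈ [d], the tuple (x_ε : j ∉ ε) belongs to Q^[d−1](X). Then there exists x_{[d]} ∈ X such that (x_ε : ε ⊆ [d]) ∈ Q^[d](X). (Property of closing parallelepipeds.) -/
open Filter Topology

noncomputable section

/-!
Let `A_d` be the closure, for pointwise convergence, of the families `ε ↦ T ^ (n₀ + n · ε)` of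
self-maps of `X`; under componentwise composition it is a compact right-topological monoid.
Distality forces every idempotent of the enveloping semigroup to be the identity, so by
Ellis–Numakura every element of `A_d` is invertible in `A_d`. Minimality makes `Q^[d]` the
orbit of any constant cube under `A_d`, so `Q^[d]` is `A_d`-invariant. Acting on the
configuration with the inverse of a representative of one face after the other makes it
constant off the top vertex, where it is closed by a constant cube.
-/

open Function

namespace ClosingParallelepipeds

variable {X : Type*}

/-- Pointwise convergence, the topology of the enveloping semigroup. -/
instance [TopologicalSpace X] : TopologicalSpace (Function.End X) := Pi.topologicalSpace

instance [TopologicalSpace X] [T2Space X] : T2Space (Function.End X) := Pi.t2Space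

instance [TopologicalSpace X] [CompactSpace X] : CompactSpace (Function.End X) :=
  Function.compactSpace

section Topology

variable [TopologicalSpace X]

lemma continuous_end_apply (x : X) : Continuous fun f : Function.End X => f x :=
  continuous_apply x

lemma continuous_end_mul_right (g : Function.End X) : Continuous (· * g) :=
  continuous_pi fun x => continuous_apply (g x)

lemma continuous_end_mul_left {f : Function.End X} (hf : Continuous f) : Continuous (f * ·) :=
  continuous_pi fun x => hf.comp (continuous_apply x)

lemma continuous_smul_pi_end {ι : Type*} (y : ι → X) :
    Continuous fun f : ι → Function.End X => f • y :=
  continuous_pi fun i =>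
    (continuous_end_apply (y i)).comp (continuous_apply (A := fun _ => Function.End X) i)

end Topology

lemma mul_mem_closure_of_mul_mem {M : Type*} [Mul M] [TopologicalSpace M] {s : Set M}
    (hs : ∀ a ∈ s, ∀ b ∈ s, a * b ∈ s) (hright : ∀ b : M, Continuous (· * b))
    (hleft : ∀ a ∈ s, Continuous (a * ·)) {a b : M} (ha : a ∈ closure s) (hb : b ∈ closure s) :
    a * b ∈ closure s := by
  have hsb : Set.MapsTo (· * b) s (closure s) := fun a' ha' =>
    Set.MapsTo.closure (f := (a' * ·)) (fun b' hb' => hs a' ha' b' hb') (hleft a' ha') hb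
  exact hsb.closure_left (hright b) isClosed_closure ha

lemma pi_smul_update {ι : Type*} [DecidableEq ι] {M α : ι → Type*} [∀ i, SMul (M i) (α i)]
    (f : ∀ i, M i) (y : ∀ i, α i) (a : ι) (z : α a) :
    f • update y a z = update (f • y) a (f a • z) :=
  funext (apply_update (fun i v => f i • v) y a z)

lemma dotP_zero {d : ℕ} (ε : Fin d → Bool) : dotP 0 ε = 0 := by
  simp [dotP]

lemma dotP_add {d : ℕ} (a b : Fin d → ℤ) (ε : Fin d → Bool) :
    dotP (a + b) ε = dotP a ε + dotP b ε := by
  simp only [dotP, Pi.add_apply, ← Finset.sum_add_distrib]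
  exact Finset.sum_congr rfl fun i _ => by cases ε i <;> simp

lemma dotP_insertNth_false {d : ℕ} (j : Fin (d + 1)) (n : Fin (d + 1) → ℤ) (η : Fin d → Bool) :
    dotP n (j.insertNth false η) = dotP (j.removeNth n) η := by
  simp [dotP, Fin.sum_univ_succAbove _ j, Fin.removeNth]

lemma dotP_removeNth {d : ℕ} (j : Fin (d + 1)) (n : Fin d → ℤ) (ε : Fin (d + 1) → Bool) :
    dotP n (j.removeNth ε) = dotP (j.insertNth 0 n) ε := by
  simp [dotP, Fin.sum_univ_succAbove _ j, Fin.removeNth]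
  rfl

section Ellis

variable [TopologicalSpace X] (T : X ≃ₜ X)

def iterEnd (n : ℤ) : Function.End X := ⇑(T.toEquiv ^ n)

lemma iterEnd_add (a b : ℤ) : iterEnd T (a + b) = iterEnd T a * iterEnd T b := by
  rw [iterEnd, zpow_add]; rfl

lemma continuous_iterEnd (n : ℤ) : Continuous (iterEnd T n) := by
  have h : T.toEquiv ^ n = (T ^ n).toEquiv :=
    (map_zpow (⟨⟨Homeomorph.toEquiv, rfl⟩, fun _ _ => rfl⟩ : (X ≃ₜ X) →* Equiv.Perm X) T n).symm
  rw [iterEnd, h]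
  exact (T ^ n).continuous

def affineCubes (d : ℕ) : Submonoid ((Fin d → Bool) → Function.End X) where
  carrier := {f | ∃ (n₀ : ℤ) (n : Fin d → ℤ), f = fun ε => iterEnd T (n₀ + dotP n ε)}
  mul_mem' := by
    rintro _ _ ⟨a₀, a, rfl⟩ ⟨b₀, b, rfl⟩
    refine ⟨a₀ + b₀, a + b, funext fun ε => ?_⟩
    rw [Pi.mul_apply, ← iterEnd_add, dotP_add]
    ring_nf
  one_mem' := ⟨0, 0, funext fun ε => by rw [dotP_zero]; rfl⟩

lemma continuous_mul_left_of_mem_affineCubes {d : ℕ} {f : (Fin d → Bool) → Function.End X}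
    (hf : f ∈ affineCubes T d) : Continuous (f * ·) := by
  obtain ⟨n₀, n, rfl⟩ := hf
  exact continuous_pi fun ε =>
    (continuous_end_mul_left (continuous_iterEnd T _)).comp (continuous_apply ε)

def ellisCube (d : ℕ) : Submonoid ((Fin d → Bool) → Function.End X) where
  carrier := closure (affineCubes T d)
  mul_mem' := mul_mem_closure_of_mul_mem (fun _ ha _ hb => mul_mem ha hb)
    (fun g => continuous_pi fun ε => (continuous_end_mul_right (g ε)).comp (continuous_apply ε))
    (fun _ => continuous_mul_left_of_mem_affineCubes T)
  one_mem' := subset_closure (affineCubes T d).one_mem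

def envelopingSemigroup : Set (Function.End X) := closure (Set.range (iterEnd T))

lemma apply_mem_envelopingSemigroup {d : ℕ} {f : (Fin d → Bool) → Function.End X}
    (hf : f ∈ ellisCube T d) (ε : Fin d → Bool) : f ε ∈ envelopingSemigroup T := by
  have hmaps : Set.MapsTo (fun g : (Fin d → Bool) → Function.End X => g ε) (affineCubes T d)
      (Set.range (iterEnd T)) := by
    rintro _ ⟨n₀, n, rfl⟩
    exact ⟨_, rfl⟩
  exact hmaps.closure (continuous_apply ε) hf

lemma const_mem_ellisCube {d : ℕ} {p : Function.End X} (hp : p ∈ envelopingSemigroup T) :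
    (fun _ => p) ∈ ellisCube T d := by
  have hmaps : Set.MapsTo (fun g : Function.End X => fun _ : Fin d → Bool => g)
      (Set.range (iterEnd T)) (affineCubes T d) := by
    rintro _ ⟨n₀, rfl⟩
    exact ⟨n₀, 0, funext fun ε => by rw [dotP_zero, add_zero]⟩
  exact hmaps.closure (continuous_pi fun _ => continuous_id) hp

lemma comp_mem_ellisCube {d d' : ℕ} (σ : (Fin d' → Bool) → Fin d → Bool)
    (hσ : ∀ n : Fin d → ℤ, ∃ n' : Fin d' → ℤ, ∀ η, dotP n (σ η) = dotP n' η)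
    {f : (Fin d → Bool) → Function.End X} (hf : f ∈ ellisCube T d) :
    f ∘ σ ∈ ellisCube T d' := by
  have hmaps : Set.MapsTo (fun g : (Fin d → Bool) → Function.End X => g ∘ σ) (affineCubes T d)
      (affineCubes T d') := by
    rintro _ ⟨n₀, n, rfl⟩
    obtain ⟨n', hn'⟩ := hσ n
    exact ⟨n₀, n', funext fun η => by simp only [comp_apply, hn']⟩
  exact hmaps.closure (continuous_pi fun η => continuous_apply (σ η)) hf

lemma comp_removeNth_mem_ellisCube {d : ℕ} (j : Fin (d + 1))
    {f : (Fin d → Bool) → Function.End X} (hf : f ∈ ellisCube T d) :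
    f ∘ j.removeNth ∈ ellisCube T (d + 1) :=
  comp_mem_ellisCube T _ (fun n => ⟨j.insertNth 0 n, dotP_removeNth j n⟩) hf

lemma comp_insertNth_mem_ellisCube {d : ℕ} (j : Fin (d + 1))
    {f : (Fin (d + 1) → Bool) → Function.End X} (hf : f ∈ ellisCube T (d + 1)) :
    f ∘ j.insertNth false ∈ ellisCube T d :=
  comp_mem_ellisCube T _ (fun n => ⟨j.removeNth n, dotP_insertNth_false j n⟩) hf

end Ellis

def IsMinimal [TopologicalSpace X] (T : X ≃ₜ X) : Prop :=
  ∀ x : X, Dense (Set.range fun n : ℤ => (T.toEquiv ^ n) x)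

def IsDistal [MetricSpace X] (T : X ≃ₜ X) : Prop :=
  ∀ x y : X, x ≠ y → ∃ δ > 0, ∀ n : ℤ, δ ≤ dist ((T.toEquiv ^ n) x) ((T.toEquiv ^ n) y)

section Distal

variable [MetricSpace X] {T : X ≃ₜ X}

lemma IsDistal.eq_one_of_mul_self (hT : IsDistal T) {u : Function.End X}
    (hu : u ∈ envelopingSemigroup T) (hidem : u * u = u) : u = 1 := by
  funext x
  by_contra hne
  obtain ⟨δ, hδ, hsep⟩ := hT x (u x) (Ne.symm hne)
  have hclosed : IsClosed {g : Function.End X | δ ≤ dist (g x) (g (u x))} :=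
    isClosed_le continuous_const ((continuous_end_apply x).dist (continuous_end_apply (u x)))
  have hu' : δ ≤ dist (u x) (u (u x)) :=
    closure_minimal (by rintro _ ⟨n, rfl⟩; exact hsep n) hclosed hu
  rw [show u (u x) = u x from congrFun hidem x, dist_self] at hu'
  exact hδ.not_ge hu'

variable [CompactSpace X]

/-- Ellis–Numakura gives an idempotent `r * q` in the compact right-topological semigroup
`ellisCube T d * q`; by distality its components are the identity. -/
lemma IsDistal.exists_mul_eq_one (hT : IsDistal T) {d : ℕ} {q : (Fin d → Bool) → Function.End X}
    (hq : q ∈ ellisCube T d) : ∃ r ∈ ellisCube T d, r * q = 1 := by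
  have hright : ∀ g : (Fin d → Bool) → Function.End X, Continuous (· * g) := fun g =>
    continuous_pi fun ε => (continuous_end_mul_right (g ε)).comp (continuous_apply ε)
  obtain ⟨_, ⟨r, hr, rfl⟩, hidem⟩ := exists_idempotent_in_compact_subsemigroup hright
    ((· * q) '' (ellisCube T d : Set ((Fin d → Bool) → Function.End X)))
    ⟨q, 1, one_mem _, one_mul q⟩
    ((isClosed_closure.isCompact).image (hright q))
    (by
      rintro _ ⟨a, ha, rfl⟩ _ ⟨b, hb, rfl⟩
      exact ⟨a * q * b, mul_mem (mul_mem ha hq) hb, by simp only [mul_assoc]⟩)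
  refine ⟨r, hr, funext fun ε => hT.eq_one_of_mul_self ?_ (congrFun hidem ε)⟩
  exact apply_mem_envelopingSemigroup T (mul_mem hr hq) ε

lemma IsDistal.exists_inverse (hT : IsDistal T) {d : ℕ} {q : (Fin d → Bool) → Function.End X}
    (hq : q ∈ ellisCube T d) : ∃ r ∈ ellisCube T d, r * q = 1 ∧ q * r = 1 := by
  obtain ⟨r, hr, hrq⟩ := hT.exists_mul_eq_one hq
  obtain ⟨r', -, hr'r⟩ := hT.exists_mul_eq_one hr
  have hq' : r' = q := left_inv_eq_right_inv hr'r hrq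
  exact ⟨r, hr, hrq, hq' ▸ hr'r⟩

end Distal

section Minimal

variable [TopologicalSpace X] [CompactSpace X] [T2Space X] {T : X ≃ₜ X}

lemma IsMinimal.exists_mem_envelopingSemigroup_apply_eq (hT : IsMinimal T) (x₀ x : X) :
    ∃ p ∈ envelopingSemigroup T, p x₀ = x := by
  have hclosed : IsClosed ((fun p : Function.End X => p x₀) '' envelopingSemigroup T) :=
    (isClosed_closure.isCompact.image (continuous_end_apply x₀)).isClosed
  have horbit : Set.range (fun n : ℤ => (T.toEquiv ^ n) x₀) ⊆
      (fun p : Function.End X => p x₀) '' envelopingSemigroup T := by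
    rintro _ ⟨n, rfl⟩
    exact ⟨iterEnd T n, subset_closure ⟨n, rfl⟩, rfl⟩
  exact closure_minimal horbit hclosed (hT x₀ x)

lemma IsMinimal.cubeQ_eq_image (hT : IsMinimal T) (d : ℕ) (x₀ : X) :
    cubeQ X T d =
      (· • fun _ => x₀) '' (ellisCube T d : Set ((Fin d → Bool) → Function.End X)) := by
  have hcont := continuous_smul_pi_end (X := X) (fun _ : Fin d → Bool => x₀)
  apply subset_antisymm
  · refine closure_minimal ?_ (isClosed_closure.isCompact.image hcont).isClosed
    rintro _ ⟨x, n, rfl⟩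
    obtain ⟨p, hp, rfl⟩ := hT.exists_mem_envelopingSemigroup_apply_eq x₀ x
    refine ⟨(fun ε => iterEnd T (0 + dotP n ε)) * fun _ => p,
      mul_mem (subset_closure ⟨0, n, rfl⟩) (const_mem_ellisCube T hp), funext fun ε => ?_⟩
    show iterEnd T (0 + dotP n ε) (p x₀) = _
    rw [zero_add]
    rfl
  · rintro _ ⟨f, hf, rfl⟩
    refine Set.MapsTo.closure ?_ hcont hf
    rintro _ ⟨n₀, n, rfl⟩
    refine ⟨iterEnd T n₀ x₀, n, funext fun ε => ?_⟩
    show iterEnd T (n₀ + dotP n ε) x₀ = _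
    rw [add_comm, iterEnd_add]
    rfl

lemma IsMinimal.smul_mem_cubeQ (hT : IsMinimal T) {d : ℕ} {f : (Fin d → Bool) → Function.End X}
    (hf : f ∈ ellisCube T d) {y : (Fin d → Bool) → X} (hy : y ∈ cubeQ X T d) :
    f • y ∈ cubeQ X T d := by
  rw [hT.cubeQ_eq_image d (y fun _ => false)] at hy ⊢
  obtain ⟨s, hs, hsy⟩ := hy
  exact ⟨f * s, mul_mem hf hs, (mul_smul f s _).trans (congrArg (f • ·) hsy)⟩

end Minimal

section Closing

variable [MetricSpace X] [CompactSpace X] {T : X ≃ₜ X}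

lemma IsMinimal.exists_apply_removeNth_eq (hT : IsMinimal T) (x₀ : X) {m : ℕ}
    {c : (Fin (m + 1) → Bool) → X} {j : Fin (m + 1)}
    (hface : (fun η => c (j.insertNth false η)) ∈ cubeQ X T m) :
    ∃ q ∈ ellisCube T m, ∀ ε, q (j.removeNth ε) x₀ = c (update ε j false) := by
  rw [hT.cubeQ_eq_image m x₀] at hface
  obtain ⟨q, hq, hqc⟩ := hface
  refine ⟨q, hq, fun ε => ?_⟩
  rw [← Fin.insertNth_removeNth]
  exact congrFun hqc (j.removeNth ε)

lemma IsMinimal.exists_update_mem_cubeQ_of_smul (hT : IsMinimal T) {d : ℕ}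
    {f g : (Fin d → Bool) → Function.End X} (hg : g ∈ ellisCube T d) (hgf : g * f = 1)
    {c : (Fin d → Bool) → X} {a : Fin d → Bool} (h : ∃ z, update (f • c) a z ∈ cubeQ X T d) :
    ∃ z, update c a z ∈ cubeQ X T d := by
  obtain ⟨z, hz⟩ := h
  refine ⟨g a z, ?_⟩
  have hc : g • update (f • c) a z = update c a (g a z) := by
    rw [pi_smul_update, smul_smul, hgf, one_smul]
    rfl
  exact hc ▸ hT.smul_mem_cubeQ hg hz

/-- Induction on the set `U` of directions in which `c` is not yet trivialised. A direction
`j ∈ U` is trivialised by acting with the inverse of an element of `ellisCube T m` that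
represents the face `j` of `c`; closing the new configuration closes `c`. -/
lemma exists_update_mem_cubeQ_of_faces (hmin : IsMinimal T) (hdist : IsDistal T) (x₀ : X)
    {m : ℕ} (U : Finset (Fin (m + 1))) (c : (Fin (m + 1) → Bool) → X)
    (htriv : ∀ ε i, i ∉ U → ε i = false → c ε = x₀)
    (hfaces : ∀ j ∈ U, (fun η => c (j.insertNth false η)) ∈ cubeQ X T m) :
    ∃ z, update c (fun _ => true) z ∈ cubeQ X T (m + 1) := by
  induction U using Finset.induction_on generalizing c with
  | empty =>
    refine ⟨x₀, ?_⟩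
    have hconst : update c (fun _ => true) x₀ = fun _ => x₀ := by
      funext ε
      rcases eq_or_ne ε (fun _ => true) with rfl | hε
      · exact update_self ..
      · obtain ⟨i, hi⟩ : ∃ i, ε i = false := by
          by_contra! h
          exact hε (funext fun i => by simpa using h i)
        rw [update_of_ne hε]
        exact htriv ε i (Finset.notMem_empty i) hi
    rw [hconst]
    exact subset_closure ⟨x₀, 0, funext fun ε => by rw [dotP_zero]; rfl⟩
  | insert j U hj ih =>
    obtain ⟨q, hq, hqc⟩ :=
      hmin.exists_apply_removeNth_eq x₀ (hfaces j (Finset.mem_insert_self j U))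
    obtain ⟨r, hr, hrq, hqr⟩ := hdist.exists_inverse hq
    refine hmin.exists_update_mem_cubeQ_of_smul (f := r ∘ j.removeNth)
      (comp_removeNth_mem_ellisCube T j hq) (funext fun ε => congrFun hqr (j.removeNth ε)) ?_
    refine ih _ (fun ε i hi hεi => ?_) (fun j' hj' => ?_)
    · have hc : c ε = c (update ε j false) := by
        rcases eq_or_ne i j with rfl | hij
        · rw [update_eq_self_iff.2 hεi.symm]
        · rw [htriv ε i (by simp [hi, hij]) hεi,
            htriv _ i (by simp [hi, hij]) (by rw [update_of_ne hij, hεi])]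
      show r (j.removeNth ε) (c ε) = x₀
      rw [hc, ← hqc]
      exact congrFun (congrFun hrq (j.removeNth ε)) x₀
    · exact hmin.smul_mem_cubeQ
        (comp_insertNth_mem_ellisCube T j' (comp_removeNth_mem_ellisCube T j hr))
        (hfaces j' (Finset.mem_insert_of_mem hj'))

end Closing

end ClosingParallelepipeds

/-- Closing parallelepipeds: if all the faces `{ε : j ∉ ε}` of a configuration
`(x_ε : ε ⊊ [d])` lie in `Q^[d-1]`, the configuration can be completed to a
parallelepiped in `Q^[d]` (here `d = m + 1 ≥ 1`). -/
theorem closing_parallelepipeds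
    {X : Type*} [MetricSpace X] [CompactSpace X] (T : X ≃ₜ X) (m : ℕ)
    (hmin : ∀ x : X, Dense (Set.range fun n : ℤ => (T.toEquiv ^ n) x))
    (hdistal : ∀ x y : X, x ≠ y →
      ∃ δ > 0, ∀ n : ℤ, δ ≤ dist ((T.toEquiv ^ n) x) ((T.toEquiv ^ n) y))
    (x : (Fin (m + 1) → Bool) → X)
    (hfaces : ∀ j : Fin (m + 1),
      (fun η : Fin m → Bool => x (j.insertNth false η)) ∈ cubeQ X T m) :
    ∃ z : X, Function.update x (fun _ => true) z ∈ cubeQ X T (m + 1) :=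
  ClosingParallelepipeds.exists_update_mem_cubeQ_of_faces hmin hdistal (x fun _ => false)
    Finset.univ x (fun _ i hi => absurd (Finset.mem_univ i) hi) (fun j _ => hfaces j)
end
end

section
/- Let (X,T) be a minimal distal system and d ≥ 1. Then the regionally proximal relation RP^[d](X) is an equivalence relation (in particular it is transitive). -/
open Filter Topology

noncomputable section

/-- The regionally proximal relation of order `d`. -/
def RP (X : Type*) [MetricSpace X] (T : X ≃ₜ X) (d : ℕ) : Set (X × X) :=
  {p | ∀ δ > 0, ∃ (x' y' : X) (n : Fin d → ℤ),
    dist p.1 x' < δ ∧ dist p.2 y' < δ ∧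
    ∀ ε : Fin d → Bool, ε ≠ vertex0 d →
      dist ((T.toEquiv ^ dotP n ε) x') ((T.toEquiv ^ dotP n ε) y') < δ}

/-- The point of `X^{2^{d+1}}` with value `a` at the vertex `∅` and given by `b`
elsewhere. -/
def set0 {X : Type*} {d : ℕ} (a : X) (b : (Fin d → Bool) → X) : (Fin d → Bool) → X :=
  fun ε => if ε = vertex0 d then a else b ε


/-!
Let the face transformations act on cubes `(ι → Bool) → X`, and let `faceEllis T ι` be their
closure in the compact space of vertexwise self-maps of `X`. This is a compact semigroup and, by
distality, a group: a limit of face transformations that is idempotent must be the identity.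
Induction on the dimension, driven by minimality, shows that every cube `c` in the closed cube
set `Q^[ι]` is `p` applied to the constant cube at its base vertex, for some `p ∈ faceEllis T ι`.
Therefore `(x, y) ∈ RP^[d]` iff some `p ∈ faceEllis T (Option (Fin d))` sends the constant cube
at `y` to `x` at every other vertex (the cube `(y, x, …, x) ∈ Q^[d+1]`). This relation is an
equivalence because `faceEllis` is a group acting vertexwise.
-/

namespace Cube

section Vertices

variable {ι κ : Type*}

def vertexMap (σ : κ → Option ι) (ε : ι → Bool) : κ → Bool :=
  fun j => (σ j).elim false ε

@[simp]
theorem vertexMap_false (σ : κ → Option ι) : vertexMap σ (fun _ => false) = fun _ => false := by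
  funext j
  simp only [vertexMap]
  cases σ j <;> rfl

def lowerVertex (ε : ι → Bool) : Option ι → Bool := fun o => o.elim false ε

def upperVertex (ε : ι → Bool) : Option ι → Bool := fun o => o.elim true ε

theorem lowerVertex_false : lowerVertex (fun _ : ι => false) = fun _ => false := by
  funext o
  cases o <;> rfl

theorem lowerVertex_ne_false {ε : ι → Bool} (hε : ε ≠ fun _ => false) :
    lowerVertex ε ≠ fun _ => false :=
  fun h => hε (funext fun i => congrFun h (some i))

theorem upperVertex_ne_false (ε : ι → Bool) : upperVertex ε ≠ fun _ => false :=
  fun h => Bool.noConfusion (congrFun h none)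

theorem exists_eq_lowerVertex_or_eq_upperVertex (η : Option ι → Bool) :
    ∃ ε, η = lowerVertex ε ∨ η = upperVertex ε := by
  refine ⟨fun i => η (some i), ?_⟩
  cases h : η none
  · left; funext o; cases o <;> simp [lowerVertex, h]
  · right; funext o; cases o <;> simp [upperVertex, h]

variable [Fintype ι]

def cubeDot (n : ι → ℤ) (ε : ι → Bool) : ℤ := ∑ i, if ε i then n i else 0

theorem cubeDot_add (n m : ι → ℤ) (ε : ι → Bool) :
    cubeDot (n + m) ε = cubeDot n ε + cubeDot m ε := by
  simp only [cubeDot, ← Finset.sum_add_distrib]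
  refine Finset.sum_congr rfl fun i _ => ?_
  split <;> simp

@[simp]
theorem cubeDot_zero (ε : ι → Bool) : cubeDot (fun _ : ι => (0 : ℤ)) ε = 0 := by
  simp [cubeDot]

theorem cubeDot_lowerVertex (n : Option ι → ℤ) (ε : ι → Bool) :
    cubeDot n (lowerVertex ε) = cubeDot (fun i => n (some i)) ε := by
  rw [cubeDot, Fintype.sum_option]
  exact zero_add _

theorem cubeDot_upperVertex (n : Option ι → ℤ) (ε : ι → Bool) :
    cubeDot n (upperVertex ε) = n none + cubeDot (fun i => n (some i)) ε := by
  rw [cubeDot, Fintype.sum_option]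
  rfl

theorem exists_cubeDot_vertexMap [Fintype κ] (σ : κ → Option ι) (n : κ → ℤ) :
    ∃ m : ι → ℤ, ∀ ε, cubeDot n (vertexMap σ ε) = cubeDot m ε := by
  classical
  refine ⟨fun i => ∑ j, if σ j = some i then n j else 0, fun ε => ?_⟩
  simp only [cubeDot, vertexMap]
  have h (i : ι) : (if ε i then ∑ j, (if σ j = some i then n j else 0) else 0) =
      ∑ j, if ε i then (if σ j = some i then n j else 0) else 0 := by
    split <;> simp
  rw [Finset.sum_congr rfl fun i _ => h i, Finset.sum_comm]
  refine Finset.sum_congr rfl fun j _ => ?_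
  rcases Option.eq_none_or_eq_some (σ j) with h | ⟨i₀, h⟩ <;> simp only [h]
  · simp
  · rw [Finset.sum_eq_single i₀ (fun i _ hi => by simp [Ne.symm hi]) (by simp)]
    congr 1
    simp

end Vertices

section Topological

variable {X : Type*} [TopologicalSpace X] (T : X ≃ₜ X) {ι : Type*} [Fintype ι]

theorem continuous_zpow (k : ℤ) : Continuous ⇑(T.toEquiv ^ k) := by
  let toPerm : (X ≃ₜ X) →* Equiv.Perm X :=
    { toFun := Homeomorph.toEquiv, map_one' := rfl, map_mul' := fun _ _ => rfl }
  rw [show T.toEquiv ^ k = (T ^ k).toEquiv from (map_zpow toPerm T k).symm]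
  exact (T ^ k).continuous

variable (ι) in
def faceFamily (n : ι → ℤ) : (ι → Bool) → X → X := fun ε => ⇑(T.toEquiv ^ cubeDot n ε)

variable (ι) in
/-- Elements act on a cube `c` vertexwise, as `fun ε => p ε (c ε)`. -/
def faceEllis : Set ((ι → Bool) → X → X) := closure (Set.range (faceFamily T ι))

variable (ι) in
/-- `cubeSet T (Fin d)` is `cubeQ X T d`. -/
def cubeSet : Set ((ι → Bool) → X) := closure {c | ∃ v n, c = fun ε => faceFamily T ι n ε v}

theorem faceFamily_add (n m : ι → ℤ) (ε : ι → Bool) :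
    faceFamily T ι (n + m) ε = faceFamily T ι n ε ∘ faceFamily T ι m ε := by
  simp [faceFamily, cubeDot_add, zpow_add]

theorem faceFamily_lowerVertex (n : Option ι → ℤ) (ε : ι → Bool) :
    faceFamily T (Option ι) n (lowerVertex ε) = faceFamily T ι (fun i => n (some i)) ε := by
  simp only [faceFamily, cubeDot_lowerVertex]

theorem faceFamily_upperVertex (n : Option ι → ℤ) (ε : ι → Bool) :
    faceFamily T (Option ι) n (upperVertex ε) =
      faceFamily T ι (fun i => n (some i)) ε ∘ ⇑(T.toEquiv ^ n none) := by
  simp only [faceFamily, cubeDot_upperVertex, add_comm (n none), zpow_add, Equiv.Perm.coe_mul]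

theorem continuous_faceFamily (n : ι → ℤ) (ε : ι → Bool) : Continuous (faceFamily T ι n ε) :=
  continuous_zpow T _

theorem faceFamily_mem_faceEllis (n : ι → ℤ) : faceFamily T ι n ∈ faceEllis T ι :=
  subset_closure ⟨n, rfl⟩

theorem id_mem_faceEllis : (fun _ => id) ∈ faceEllis T ι := by
  convert faceFamily_mem_faceEllis T (fun _ : ι => (0 : ℤ))
  funext ε
  simp [faceFamily]

theorem comp_mem_faceEllis {p q : (ι → Bool) → X → X} (hp : p ∈ faceEllis T ι)
    (hq : q ∈ faceEllis T ι) : (fun ε => p ε ∘ q ε) ∈ faceEllis T ι := by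
  have hgen (n : ι → ℤ) : (fun ε => faceFamily T ι n ε ∘ q ε) ∈ faceEllis T ι := by
    refine map_mem_closure (f := fun r ε => faceFamily T ι n ε ∘ r ε) ?_ hq ?_
    · exact continuous_pi fun ε => continuous_pi fun z =>
        (continuous_faceFamily T n ε).comp ((continuous_apply z).comp (continuous_apply ε))
    · rintro _ ⟨m, rfl⟩
      exact ⟨n + m, funext fun ε => faceFamily_add T n m ε⟩
  refine closure_minimal (t := {r | (fun ε => r ε ∘ q ε) ∈ faceEllis T ι}) ?_ ?_ hp
  · rintro _ ⟨n, rfl⟩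
    exact hgen n
  · refine isClosed_closure.preimage ?_
    exact continuous_pi fun ε => continuous_pi fun z =>
      (continuous_apply (q ε z)).comp (continuous_apply ε)

theorem comp_vertexMap_mem_faceEllis {κ : Type*} [Fintype κ] (σ : ι → Option κ)
    {p : (ι → Bool) → X → X} (hp : p ∈ faceEllis T ι) : p ∘ vertexMap σ ∈ faceEllis T κ := by
  refine map_mem_closure (f := fun r => r ∘ vertexMap σ) ?_ hp ?_
  · exact continuous_pi fun ε => continuous_apply _
  · rintro _ ⟨n, rfl⟩
    obtain ⟨m, hm⟩ := exists_cubeDot_vertexMap σ n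
    exact ⟨m, funext fun ε => by simp [faceFamily, hm]⟩

theorem comp_tail_mem_faceEllis {p : (ι → Bool) → X → X} (hp : p ∈ faceEllis T ι) :
    (fun η : Option ι → Bool => p fun i => η (some i)) ∈ faceEllis T (Option ι) :=
  comp_vertexMap_mem_faceEllis T (fun i => some (some i)) hp

theorem apply_mem_cubeSet {p : (ι → Bool) → X → X} (hp : p ∈ faceEllis T ι)
    {c : (ι → Bool) → X} (hc : c ∈ cubeSet T ι) : (fun ε => p ε (c ε)) ∈ cubeSet T ι := by
  have hgen (n : ι → ℤ) : (fun ε => faceFamily T ι n ε (c ε)) ∈ cubeSet T ι := by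
    refine map_mem_closure (f := fun b ε => faceFamily T ι n ε (b ε)) ?_ hc ?_
    · exact continuous_pi fun ε => (continuous_faceFamily T n ε).comp (continuous_apply ε)
    · rintro _ ⟨v, m, rfl⟩
      exact ⟨v, n + m, funext fun ε => by simp [faceFamily_add]⟩
  refine closure_minimal (t := {r | (fun ε => r ε (c ε)) ∈ cubeSet T ι}) ?_ ?_ hp
  · rintro _ ⟨n, rfl⟩
    exact hgen n
  · refine isClosed_closure.preimage ?_
    exact continuous_pi fun ε => (continuous_apply (c ε)).comp (continuous_apply ε)

theorem comp_vertexMap_mem_cubeSet {κ : Type*} [Fintype κ] (σ : ι → Option κ)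
    {c : (ι → Bool) → X} (hc : c ∈ cubeSet T ι) : c ∘ vertexMap σ ∈ cubeSet T κ := by
  refine map_mem_closure (f := fun b => b ∘ vertexMap σ) ?_ hc ?_
  · exact continuous_pi fun ε => continuous_apply _
  · rintro _ ⟨v, n, rfl⟩
    obtain ⟨m, hm⟩ := exists_cubeDot_vertexMap σ n
    exact ⟨v, m, funext fun ε => by simp [faceFamily, hm]⟩

theorem comp_lowerVertex_mem_cubeSet {c : (Option ι → Bool) → X}
    (hc : c ∈ cubeSet T (Option ι)) : c ∘ lowerVertex ∈ cubeSet T ι :=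
  comp_vertexMap_mem_cubeSet T id hc

theorem comp_upperVertex_mem_cubeSet {c : (Option ι → Bool) → X}
    (hc : c ∈ cubeSet T (Option ι)) : c ∘ upperVertex ∈ cubeSet T ι := by
  refine map_mem_closure (f := fun b => b ∘ upperVertex) ?_ hc ?_
  · exact continuous_pi fun ε => continuous_apply _
  · rintro _ ⟨v, n, rfl⟩
    exact ⟨(T.toEquiv ^ n none) v, fun i => n (some i),
      funext fun ε => congrFun (faceFamily_upperVertex T n ε) v⟩

def IsMinimal : Prop := ∀ x : X, Dense (Set.range fun n : ℤ => (T.toEquiv ^ n) x)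

theorem halfCube_mem_cubeSet (hT : IsMinimal T) (a b : X) :
    (fun η : Option ι → Bool => if η none then a else b) ∈ cubeSet T (Option ι) := by
  refine map_mem_closure (f := fun w (η : Option ι → Bool) => if η none then w else b)
    (continuous_pi fun η => continuous_id.if_const _ continuous_const) (hT b a) ?_
  rintro _ ⟨s, rfl⟩
  refine ⟨b, fun o => o.elim s (fun _ => 0), funext fun η => ?_⟩
  obtain ⟨ε, rfl | rfl⟩ := exists_eq_lowerVertex_or_eq_upperVertex η <;>
    simp [faceFamily, cubeDot_lowerVertex, cubeDot_upperVertex, lowerVertex, upperVertex]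

variable (ι) in
def CubesInDiagonalOrbits : Prop :=
  ∀ c ∈ cubeSet T ι, ∃ p ∈ faceEllis T ι, ∀ ε, p ε (c fun _ => false) = c ε

theorem cubesInDiagonalOrbits_of_isEmpty [IsEmpty ι] : CubesInDiagonalOrbits T ι := by
  intro c _
  refine ⟨fun _ => id, id_mem_faceEllis T, fun ε => ?_⟩
  rw [Subsingleton.elim ε fun _ => false]
  rfl

theorem CubesInDiagonalOrbits.of_equiv {κ : Type*} [Fintype κ] (e : ι ≃ κ)
    (h : CubesInDiagonalOrbits T ι) : CubesInDiagonalOrbits T κ := by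
  intro c hc
  obtain ⟨p, hp, hpc⟩ := h _ (comp_vertexMap_mem_cubeSet T (fun k => some (e.symm k)) hc)
  simp only [Function.comp_apply, vertexMap_false] at hpc
  refine ⟨_, comp_vertexMap_mem_faceEllis T (fun i => some (e i)) hp,
    fun ε => (hpc _).trans (congrArg c ?_)⟩
  funext k
  simp [vertexMap]

variable (ι) in
/-- `FaceRel T (Option (Fin d)) x y` is the paper's `(y, x, …, x) ∈ Q^[d+1]`, read through
`cubesInDiagonalOrbits`. -/
def FaceRel (x y : X) : Prop :=
  ∃ p ∈ faceEllis T ι, ∀ ε ≠ (fun _ => false), p ε y = x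

end Topological

section Metric

variable {X : Type*} [MetricSpace X] (T : X ≃ₜ X) {ι : Type*} [Fintype ι]

def IsDistal : Prop :=
  ∀ x y : X, x ≠ y → ∃ δ > 0, ∀ n : ℤ, δ ≤ dist ((T.toEquiv ^ n) x) ((T.toEquiv ^ n) y)

theorem exists_faceFamily_near {J : Type*} [Fintype J] {p : (ι → Bool) → X → X}
    (hp : p ∈ faceEllis T ι) (ε : J → ι → Bool) (z : J → X) {δ : ℝ} (hδ : 0 < δ) :
    ∃ n, ∀ j, dist (faceFamily T ι n (ε j) (z j)) (p (ε j) (z j)) < δ := by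
  have hcont : Continuous fun (r : (ι → Bool) → X → X) j => r (ε j) (z j) :=
    continuous_pi fun j => (continuous_apply (z j)).comp (continuous_apply (ε j))
  obtain ⟨_, ⟨_, ⟨n, rfl⟩, rfl⟩, hn⟩ :=
    Metric.mem_closure_iff.1 (map_mem_closure hcont hp (Set.mapsTo_image _ _)) δ hδ
  rw [dist_comm, dist_pi_lt_iff hδ] at hn
  exact ⟨n, hn⟩

theorem eq_id_of_comp_self (hT : IsDistal T) {u : (ι → Bool) → X → X}
    (hu : u ∈ faceEllis T ι) (h : ∀ ε, u ε ∘ u ε = u ε) : u = fun _ => id := by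
  funext ε z
  by_contra hne
  obtain ⟨δ, hδ, hsep⟩ := hT z (u ε z) (Ne.symm hne)
  obtain ⟨n, hn⟩ := exists_faceFamily_near T hu (fun _ => ε) ![z, u ε z] (half_pos hδ)
  have h₀ : dist (faceFamily T ι n ε z) (u ε z) < δ / 2 := hn 0
  have h₁ : dist (faceFamily T ι n ε (u ε z)) (u ε z) < δ / 2 := by
    have : u ε (u ε z) = u ε z := congrFun (h ε) z
    simpa [this] using hn 1
  refine (hsep (cubeDot n ε)).not_gt ?_
  calc dist (faceFamily T ι n ε z) (faceFamily T ι n ε (u ε z))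
      ≤ dist (faceFamily T ι n ε z) (u ε z) + dist (faceFamily T ι n ε (u ε z)) (u ε z) :=
        dist_triangle_right _ _ _
    _ < δ / 2 + δ / 2 := add_lt_add h₀ h₁
    _ = δ := add_halves δ

end Metric

section Compact

variable {X : Type*} [MetricSpace X] [CompactSpace X] (T : X ≃ₜ X) {ι : Type*} [Fintype ι]

theorem isCompact_faceEllis : IsCompact (faceEllis T ι) := isClosed_closure.isCompact

theorem isCompact_cubeSet : IsCompact (cubeSet T ι) := isClosed_closure.isCompact

theorem exists_leftInverse_mem_faceEllis (hT : IsDistal T) {p : (ι → Bool) → X → X}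
    (hp : p ∈ faceEllis T ι) : ∃ q ∈ faceEllis T ι, ∀ ε, Function.LeftInverse (q ε) (p ε) := by
  -- Ellis–Numakura: the compact semigroup `faceEllis ∘ p` has an idempotent, which is the
  -- identity by distality.
  let : Semigroup ((ι → Bool) → X → X) :=
    { mul := fun q r ε => q ε ∘ r ε, mul_assoc := fun _ _ _ => rfl }
  have hcont (r : (ι → Bool) → X → X) : Continuous fun q : (ι → Bool) → X → X => q * r :=
    continuous_pi fun ε => continuous_pi fun z =>
      (continuous_apply (r ε z)).comp (continuous_apply ε)
  obtain ⟨_, ⟨q, hq, rfl⟩, hidem⟩ := exists_idempotent_in_compact_subsemigroup hcont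
    ((· * p) '' faceEllis T ι) ⟨_, _, id_mem_faceEllis T, rfl⟩
    ((isCompact_faceEllis T).image (hcont p))
    (by
      rintro _ ⟨q, hq, rfl⟩ _ ⟨r, hr, rfl⟩
      exact ⟨q * p * r, comp_mem_faceEllis T (comp_mem_faceEllis T hq hp) hr, rfl⟩)
  have hid := eq_id_of_comp_self T hT (comp_mem_faceEllis T hq hp) (congrFun hidem)
  exact ⟨q, hq, fun ε z => congrFun (congrFun hid ε) z⟩

theorem exists_inverse_mem_faceEllis (hT : IsDistal T) {p : (ι → Bool) → X → X}
    (hp : p ∈ faceEllis T ι) :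
    ∃ q ∈ faceEllis T ι, ∀ ε, Function.LeftInverse (q ε) (p ε) ∧
      Function.RightInverse (q ε) (p ε) := by
  obtain ⟨q, hq, hqp⟩ := exists_leftInverse_mem_faceEllis T hT hp
  obtain ⟨r, -, hrq⟩ := exists_leftInverse_mem_faceEllis T hT hq
  refine ⟨q, hq, fun ε => ⟨hqp ε, fun z => ?_⟩⟩
  calc p ε (q ε z) = r ε (q ε (p ε (q ε z))) := (hrq ε _).symm
    _ = z := by rw [hqp ε, hrq ε]

theorem FaceRel.equivalence (hdist : IsDistal T) : Equivalence (FaceRel T ι) where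
  refl _ := ⟨fun _ => id, id_mem_faceEllis T, fun _ _ => rfl⟩
  symm := by
    rintro x y ⟨p, hp, hpy⟩
    obtain ⟨q, hq, hinv⟩ := exists_inverse_mem_faceEllis T hdist hp
    exact ⟨q, hq, fun ε hε => by rw [← hpy ε hε, (hinv ε).1]⟩
  trans := by
    rintro x y z ⟨p, hp, hpy⟩ ⟨q, hq, hqz⟩
    exact ⟨_, comp_mem_faceEllis T hp hq, fun ε hε => by
      simp only [Function.comp_apply, hqz ε hε, hpy ε hε]⟩

theorem exists_faceEllis_upperVertex_eq (hT : IsMinimal T) {c : (ι → Bool) → X}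
    (hc : c ∈ cubeSet T ι) (y : X) :
    ∃ q ∈ faceEllis T (Option ι), ∀ ε, q (upperVertex ε) y = c ε := by
  -- The extra coordinate carries the diagonal action of `T`, so the compact set of cubes
  -- `q (upperVertex ·) y` contains every `faceFamily T ι n · (T ^ s y)`; by minimality these
  -- are dense in `cubeSet T ι`.
  have hcont : Continuous fun (q : (Option ι → Bool) → X → X) ε => q (upperVertex ε) y :=
    continuous_pi fun ε => (continuous_apply y).comp (continuous_apply (upperVertex ε))
  have hK := ((isCompact_faceEllis T).image hcont).isClosed
  suffices cubeSet T ι ⊆ (fun q ε => q (upperVertex ε) y) '' faceEllis T (Option ι) by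
    obtain ⟨q, hq, hqc⟩ := this hc
    exact ⟨q, hq, fun ε => congrFun hqc ε⟩
  refine closure_minimal ?_ hK
  rintro _ ⟨v, n, rfl⟩
  refine Set.MapsTo.closure_left (f := fun w ε => faceFamily T ι n ε w) ?_
    (continuous_pi fun ε => continuous_faceFamily T n ε) hK (hT y v)
  rintro _ ⟨s, rfl⟩
  refine ⟨faceFamily T (Option ι) (fun o => o.elim s n), faceFamily_mem_faceEllis T _, ?_⟩
  funext ε
  simp only [faceFamily, cubeDot_upperVertex, Option.elim]
  rw [add_comm, zpow_add, Equiv.Perm.mul_apply]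

theorem exists_faceEllis_apply_eq_of_lowerVertex (hmin : IsMinimal T) (hdist : IsDistal T)
    {c : (Option ι → Bool) → X} (hc : c ∈ cubeSet T (Option ι)) {y : X}
    (hy : ∀ ε, c (lowerVertex ε) = y) : ∃ r ∈ faceEllis T (Option ι), ∀ η, r η y = c η := by
  obtain ⟨q, hq, hqc⟩ := exists_faceEllis_upperVertex_eq T hmin hc y
  obtain ⟨q', hq', hinv⟩ := exists_inverse_mem_faceEllis T hdist hq
  -- Both vertex maps send the lower half of `η` to the same vertex, where `q ∘ q'` cancels.
  -- On the upper half, `vertexMap σ₁` lands where `q` (hence `q'`) fixes `y`, and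
  -- `vertexMap σ₂` lands where `q` produces `c`.
  let σ₁ : Option (Option ι) → Option (Option ι) :=
    fun j => j.elim (some none) fun o => o.elim none fun k => some (some k)
  let σ₂ : Option (Option ι) → Option (Option ι) :=
    fun j => j.elim (some none) fun o => o.elim (some none) fun k => some (some k)
  refine ⟨fun η => q (vertexMap σ₂ η) ∘ q' (vertexMap σ₁ η),
    comp_mem_faceEllis T (comp_vertexMap_mem_faceEllis T σ₂ hq)
      (comp_vertexMap_mem_faceEllis T σ₁ hq'), fun η => ?_⟩
  obtain ⟨ε, rfl | rfl⟩ := exists_eq_lowerVertex_or_eq_upperVertex η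
  · have h : vertexMap σ₂ (lowerVertex ε) = vertexMap σ₁ (lowerVertex ε) := by
      funext j; rcases j with _ | _ | k <;> rfl
    simp only [Function.comp_apply, h, (hinv _).2 y, hy]
  · have h₁ : vertexMap σ₁ (upperVertex ε) = upperVertex (lowerVertex ε) := by
      funext j; rcases j with _ | _ | k <;> rfl
    have h₂ : vertexMap σ₂ (upperVertex ε) = upperVertex (upperVertex ε) := by
      funext j; rcases j with _ | _ | k <;> rfl
    have hfix : q' (upperVertex (lowerVertex ε)) y = y := by
      conv_lhs => rw [← hy ε, ← hqc (lowerVertex ε)]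
      exact (hinv _).1 y
    simp only [Function.comp_apply, h₁, h₂, hfix, hqc]

theorem CubesInDiagonalOrbits.option (hmin : IsMinimal T) (hdist : IsDistal T)
    (h : CubesInDiagonalOrbits T ι) : CubesInDiagonalOrbits T (Option ι) := by
  intro c hc
  obtain ⟨p, hp, hpc⟩ := h (c ∘ lowerVertex) (comp_lowerVertex_mem_cubeSet T hc)
  obtain ⟨p', hp', hinv⟩ := exists_inverse_mem_faceEllis T hdist hp
  simp only [Function.comp_apply, lowerVertex_false] at hpc
  obtain ⟨r, hr, hrc⟩ := exists_faceEllis_apply_eq_of_lowerVertex T hmin hdist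
    (apply_mem_cubeSet T (comp_tail_mem_faceEllis T hp') hc)
    (y := c fun _ => false) fun ε => by
      show p' ε (c (lowerVertex ε)) = _
      rw [← hpc ε, (hinv ε).1]
  refine ⟨fun η => p (fun i => η (some i)) ∘ r η,
    comp_mem_faceEllis T (comp_tail_mem_faceEllis T hp) hr, fun η => ?_⟩
  simp only [Function.comp_apply, hrc η]
  exact (hinv _).2 _

theorem cubesInDiagonalOrbits (hmin : IsMinimal T) (hdist : IsDistal T) :
    CubesInDiagonalOrbits T ι := by
  refine Fintype.induction_empty_option (P := fun ι [Fintype ι] => CubesInDiagonalOrbits T ι)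
    (fun _ κ _ e h => by
      let := Fintype.ofEquiv κ e.symm
      exact h.of_equiv T e) (cubesInDiagonalOrbits_of_isEmpty T)
    (fun _ _ h => h.option T hmin hdist) ι

theorem faceRel_of_mem_cubeSet (hmin : IsMinimal T) (hdist : IsDistal T)
    {c : (Option ι → Bool) → X} (hc : c ∈ cubeSet T (Option ι))
    (hsym : ∀ ε ≠ (fun _ => false), c (lowerVertex ε) = c (upperVertex ε)) :
    FaceRel T (Option ι) (c (upperVertex fun _ => false)) (c fun _ => false) := by
  obtain ⟨p, hp, hpc⟩ := cubesInDiagonalOrbits T hmin hdist c hc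
  obtain ⟨ψ, hψ, hψc⟩ := cubesInDiagonalOrbits T hmin hdist _ (comp_upperVertex_mem_cubeSet T hc)
  obtain ⟨ψ', hψ', hinv⟩ := exists_inverse_mem_faceEllis T hdist hψ
  have hup (ε : ι → Bool) : ψ' ε (c (upperVertex ε)) = c (upperVertex fun _ => false) :=
    (congrArg (ψ' ε) (hψc ε).symm).trans ((hinv ε).1 _)
  refine ⟨fun η => ψ' (fun i => η (some i)) ∘ p η,
    comp_mem_faceEllis T (comp_tail_mem_faceEllis T hψ') hp, fun η hη => ?_⟩
  obtain ⟨ε, rfl | rfl⟩ := exists_eq_lowerVertex_or_eq_upperVertex η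
  · have hε : ε ≠ fun _ => false := by
      rintro rfl
      exact hη lowerVertex_false
    simp only [Function.comp_apply, hpc, hsym ε hε]
    exact hup ε
  · simp only [Function.comp_apply, hpc]
    exact hup ε

end Compact

end Cube

open Cube

section RegionallyProximal

variable {X : Type*} [MetricSpace X] (T : X ≃ₜ X) {d : ℕ}

theorem mem_RP_of_faceRel {x y : X} (h : FaceRel T (Option (Fin d)) x y) :
    (x, y) ∈ RP X T d := by
  obtain ⟨p, hp, hpy⟩ := h
  intro δ hδ
  obtain ⟨n, hn⟩ := exists_faceFamily_near T hp id (fun _ => y) (half_pos hδ)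
  have hnear (η : Option (Fin d) → Bool) (hη : η ≠ fun _ => false) :
      dist (faceFamily T _ n η y) x < δ / 2 := by
    simpa [hpy η hη] using hn η
  have hupper (ε : Fin d → Bool) : faceFamily T _ n (upperVertex ε) y =
      (T.toEquiv ^ dotP (fun i => n (some i)) ε) ((T.toEquiv ^ n none) y) := by
    rw [faceFamily_upperVertex]
    rfl
  have hlower (ε : Fin d → Bool) :
      faceFamily T _ n (lowerVertex ε) y = (T.toEquiv ^ dotP (fun i => n (some i)) ε) y := by
    rw [faceFamily_lowerVertex]
    rfl
  refine ⟨(T.toEquiv ^ n none) y, y, fun i => n (some i), ?_, by simpa using hδ, fun ε hε => ?_⟩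
  · calc dist x ((T.toEquiv ^ n none) y)
        = dist (faceFamily T _ n (upperVertex fun _ => false) y) x := by
          rw [dist_comm, hupper]
          simp [dotP]
      _ < δ / 2 := hnear _ (upperVertex_ne_false _)
      _ < δ := half_lt_self hδ
  · calc _ ≤ dist (faceFamily T _ n (upperVertex ε) y) x
          + dist (faceFamily T _ n (lowerVertex ε) y) x := by
          rw [hupper, hlower]
          exact dist_triangle_right _ _ _
      _ < δ / 2 + δ / 2 :=
          add_lt_add (hnear _ (upperVertex_ne_false ε)) (hnear _ (lowerVertex_ne_false hε))
      _ = δ := add_halves δ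

variable [CompactSpace X]

theorem exists_cube_of_mem_RP (hmin : IsMinimal T) {x y : X} (h : (x, y) ∈ RP X T d) :
    ∃ c ∈ cubeSet T (Option (Fin d)), c (fun _ => false) = y ∧
      c (upperVertex fun _ => false) = x ∧
      ∀ ε ≠ vertex0 d, c (lowerVertex ε) = c (upperVertex ε) := by
  let Φ (c : (Option (Fin d) → Bool) → X) : X × X × ({ε // ε ≠ vertex0 d} → ℝ) :=
    (c fun _ => false, c (upperVertex fun _ => false),
      fun ε => dist (c (lowerVertex ε.1)) (c (upperVertex ε.1)))
  have hΦ : Continuous Φ := by fun_prop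
  have hK := ((isCompact_cubeSet T).image hΦ).isClosed
  obtain ⟨c, hc, hΦc⟩ : (y, x, 0) ∈ Φ '' cubeSet T (Option (Fin d)) := by
    refine hK.closure_subset (Metric.mem_closure_iff.2 fun δ hδ => ?_)
    obtain ⟨x', y', n, hx, hy, hn⟩ := h δ hδ
    let c (η : Option (Fin d) → Bool) : X :=
      faceFamily T _ (fun o => o.elim 0 n) η (if η none then x' else y')
    have hc : c ∈ cubeSet T (Option (Fin d)) :=
      apply_mem_cubeSet T (faceFamily_mem_faceEllis T _) (halfCube_mem_cubeSet T hmin x' y')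
    have hlower (ε : Fin d → Bool) : c (lowerVertex ε) = (T.toEquiv ^ dotP n ε) y' := by
      simp [c, faceFamily_lowerVertex, lowerVertex]
      rfl
    have hupper (ε : Fin d → Bool) : c (upperVertex ε) = (T.toEquiv ^ dotP n ε) x' := by
      simp [c, faceFamily_upperVertex, upperVertex]
      rfl
    refine ⟨Φ c, ⟨c, hc, rfl⟩, ?_⟩
    simp only [Φ, Prod.dist_eq, max_lt_iff, dist_pi_lt_iff hδ, ← lowerVertex_false, hlower,
      hupper, Real.dist_eq, Pi.zero_apply, zero_sub, abs_neg, abs_dist]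
    refine ⟨by simpa [dotP] using hy, by simpa [dotP] using hx, fun ε => ?_⟩
    rw [dist_comm]
    exact hn ε.1 ε.2
  simp only [Φ, Prod.ext_iff, funext_iff] at hΦc
  exact ⟨c, hc, hΦc.1, hΦc.2.1, fun ε hε => dist_eq_zero.1 (hΦc.2.2 ⟨ε, hε⟩)⟩

theorem mem_RP_iff_faceRel (hmin : IsMinimal T) (hdist : IsDistal T) {x y : X} :
    (x, y) ∈ RP X T d ↔ FaceRel T (Option (Fin d)) x y := by
  refine ⟨fun h => ?_, mem_RP_of_faceRel T⟩
  obtain ⟨c, hc, rfl, rfl, hsym⟩ := exists_cube_of_mem_RP T hmin h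
  exact faceRel_of_mem_cubeSet T hmin hdist hc hsym

end RegionallyProximal

theorem RP_equivalence_general
    {X : Type*} [MetricSpace X] [CompactSpace X] (T : X ≃ₜ X) (d : ℕ)
    (hmin : ∀ x : X, Dense (Set.range fun n : ℤ => (T.toEquiv ^ n) x))
    (hdistal : ∀ x y : X, x ≠ y →
      ∃ δ > 0, ∀ n : ℤ, δ ≤ dist ((T.toEquiv ^ n) x) ((T.toEquiv ^ n) y)) :
    Equivalence (fun x y : X => (x, y) ∈ RP X T d) := by
  simpa only [mem_RP_iff_faceRel T hmin hdistal] using FaceRel.equivalence T hdistal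

/-- In a minimal distal system, `RP^[d]` is an equivalence relation. -/
theorem RP_equivalence
    {X : Type*} [MetricSpace X] [CompactSpace X] (T : X ≃ₜ X) (d : ℕ) (hd : 1 ≤ d)
    (hmin : ∀ x : X, Dense (Set.range fun n : ℤ => (T.toEquiv ^ n) x))
    (hdistal : ∀ x y : X, x ≠ y →
      ∃ δ > 0, ∀ n : ℤ, δ ≤ dist ((T.toEquiv ^ n) x) ((T.toEquiv ^ n) y)) :
    Equivalence (fun x y : X => (x, y) ∈ RP X T d) :=
  RP_equivalence_general T d hmin hdistal
end
end

section
/- Let (X,μ,T) be an ergodic measure-preserving system, d ≥ 1, and let μ^[d] be the cubic measure on X^{2^d} whose two-dimensional marginals are all μ × μ. Let f_ε ∈ L^∞(μ) for nonempty ε ⊆ [d] and let F ∈ L^2(μ) satisfy ∫ g·F dμ = ∫ g(x_∅) ∏_{ε≠∅} f_ε(x_ε) dμ^[d] for all g ∈ L^∞(μ). Then ‖F‖_{L^∞(μ)} ≤ ∏_{ε≠∅} ‖f_ε‖_{L^{2^d−1}(μ)}. -/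
open Filter Topology MeasureTheory

noncomputable section

/-! With `m = 2^d - 1`, Hölder's inequality with `m` equal exponents applied to
`|g(x_∅)| ∏_ε |f_ε(x_ε)| = ∏_ε (|g(x_∅)| |f_ε(x_ε)|^m)^{1/m}` bounds `|∫ g F dμ|` by
`∏_ε (∫ |g(x_∅)| |f_ε(x_ε)|^m dμ^[d])^{1/m}`. Each factor only sees the pair `(x_∅, x_ε)`, whose
law is `μ × μ`, so it splits and `|∫ g F dμ| ≤ ‖g‖₁ ∏_ε ‖f_ε‖_m`. Testing against indicators of
sets turns this `L¹`-duality bound into `‖F‖_∞ ≤ ∏_ε ‖f_ε‖_m`. -/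

open scoped ENNReal

theorem ENNReal.prod_mul_rpow_inv_card {ι : Type*} {s : Finset ι} (hs : s.Nonempty)
    (a : ℝ≥0∞) (b : ι → ℝ≥0∞) :
    ∏ i ∈ s, (a * b i) ^ (s.card : ℝ)⁻¹ = a * ∏ i ∈ s, b i ^ (s.card : ℝ)⁻¹ := by
  have hm : (s.card : ℝ) ≠ 0 := by exact_mod_cast hs.card_pos.ne'
  rw [Finset.prod_congr rfl fun i _ => ENNReal.mul_rpow_of_nonneg a (b i) (by positivity),
    Finset.prod_mul_distrib, Finset.prod_const, ← ENNReal.rpow_natCast, ← ENNReal.rpow_mul,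
    inv_mul_cancel₀ hm, ENNReal.rpow_one]

section Duality

variable {X : Type*} [MeasurableSpace X] {μ : Measure X} [IsFiniteMeasure μ] {F : X → ℝ}

theorem ae_abs_le_of_forall_abs_setIntegral_le (hF : Integrable F μ) {c : ℝ}
    (h : ∀ s, MeasurableSet s → |∫ x in s, F x ∂μ| ≤ c * μ.real s) :
    ∀ᵐ x ∂μ, |F x| ≤ c := by
  have hc : ∀ s, ∫ _ in s, c ∂μ = c * μ.real s := fun s => by
    rw [setIntegral_const, smul_eq_mul, mul_comm]
  have hle : F ≤ᵐ[μ] fun _ => c :=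
    ae_le_of_forall_setIntegral_le hF (integrable_const c) fun s hs _ => by
      rw [hc]; exact (le_abs_self _).trans (h s hs)
  have hge : -F ≤ᵐ[μ] fun _ => c :=
    ae_le_of_forall_setIntegral_le hF.neg (integrable_const c) fun s hs _ => by
      rw [hc, Pi.neg_def, integral_neg]; exact (neg_le_abs _).trans (h s hs)
  filter_upwards [hle, hge] with x hx hx' using abs_le.2 ⟨neg_le.1 hx', hx⟩

theorem eLpNorm_top_le_of_forall_enorm_integral_mul_le (hF : Integrable F μ) {C : ℝ≥0∞}
    (h : ∀ g : X → ℝ, MemLp g ⊤ μ → ‖∫ x, g x * F x ∂μ‖ₑ ≤ (∫⁻ x, ‖g x‖ₑ ∂μ) * C) :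
    eLpNorm F ⊤ μ ≤ C := by
  rcases eq_or_ne C ⊤ with rfl | hC
  · exact le_top
  have hset : ∀ s, MeasurableSet s → |∫ x in s, F x ∂μ| ≤ C.toReal * μ.real s := by
    intro s hs
    have hg : MemLp (s.indicator 1) ⊤ μ := (memLp_top_const (1 : ℝ)).indicator hs
    have key := h _ hg
    have h1 : ∫ x, s.indicator 1 x * F x ∂μ = ∫ x in s, F x ∂μ := by
      rw [← integral_indicator hs]
      congr 1 with x
      by_cases hx : x ∈ s <;> simp [hx]
    have h2 : ∫⁻ x, ‖s.indicator (1 : X → ℝ) x‖ₑ ∂μ = μ s := by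
      rw [← lintegral_indicator_one hs]
      congr 1 with x
      by_cases hx : x ∈ s <;> simp [hx]
    rw [h1, h2, ← ENNReal.ofReal_toReal (ENNReal.mul_ne_top (measure_ne_top μ s) hC),
      Real.enorm_eq_ofReal_abs, ENNReal.ofReal_le_ofReal_iff (by positivity),
      ENNReal.toReal_mul] at key
    rwa [mul_comm]
  rw [eLpNorm_exponent_top, ← ENNReal.ofReal_toReal hC]
  exact eLpNormEssSup_le_of_ae_bound (ae_abs_le_of_forall_abs_setIntegral_le hF hset)

end Duality

section CubeHolder

variable {ι X : Type*} [MeasurableSpace X] {μ : Measure X} {ν : Measure (ι → X)}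

theorem aemeasurable_apply_mul_apply_of_map_eq_prod {v w : ι}
    (hν : ν.map (fun y => (y v, y w)) = μ.prod μ) {G H : X → ℝ≥0∞}
    (hG : AEMeasurable G μ) (hH : AEMeasurable H μ) :
    AEMeasurable (fun y => G (y v) * H (y w)) ν := by
  have hGH : AEMeasurable (fun z : X × X => G z.1 * H z.2) (ν.map fun y => (y v, y w)) := by
    rw [hν]; exact hG.comp_fst.mul hH.comp_snd
  exact hGH.comp_aemeasurable (by fun_prop)

variable [SFinite μ]

theorem lintegral_apply_mul_apply_of_map_eq_prod {v w : ι}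
    (hν : ν.map (fun y => (y v, y w)) = μ.prod μ) {G H : X → ℝ≥0∞}
    (hG : AEMeasurable G μ) (hH : AEMeasurable H μ) :
    ∫⁻ y, G (y v) * H (y w) ∂ν = (∫⁻ x, G x ∂μ) * ∫⁻ x, H x ∂μ := by
  rw [← lintegral_prod_mul hG hH, ← hν, lintegral_map' _ (by fun_prop)]
  rw [hν]; exact hG.comp_fst.mul hH.comp_snd

theorem lintegral_apply_mul_prod_le_of_map_eq_prod {v : ι} {s : Finset ι} (hs : s.Nonempty)
    (hν : ∀ w ∈ s, ν.map (fun y => (y v, y w)) = μ.prod μ) {G : X → ℝ≥0∞}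
    {H : ι → X → ℝ≥0∞} (hG : AEMeasurable G μ) (hH : ∀ w ∈ s, AEMeasurable (H w) μ) :
    ∫⁻ y, G (y v) * ∏ w ∈ s, H w (y w) ∂ν ≤
      (∫⁻ x, G x ∂μ) * ∏ w ∈ s, (∫⁻ x, H w x ^ (s.card : ℝ) ∂μ) ^ (s.card : ℝ)⁻¹ := by
  have hm : (s.card : ℝ) ≠ 0 := by exact_mod_cast hs.card_pos.ne'
  calc ∫⁻ y, G (y v) * ∏ w ∈ s, H w (y w) ∂ν
      = ∫⁻ y, ∏ w ∈ s, (G (y v) * H w (y w) ^ (s.card : ℝ)) ^ (s.card : ℝ)⁻¹ ∂ν := by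
        simp only [ENNReal.prod_mul_rpow_inv_card hs, ENNReal.rpow_rpow_inv hm]
    _ ≤ ∏ w ∈ s, (∫⁻ y, G (y v) * H w (y w) ^ (s.card : ℝ) ∂ν) ^ (s.card : ℝ)⁻¹ := by
        refine ENNReal.lintegral_prod_norm_pow_le s (fun w hw => ?_) ?_ fun _ _ => by positivity
        · exact aemeasurable_apply_mul_apply_of_map_eq_prod (hν w hw) hG ((hH w hw).pow_const _)
        · rw [Finset.sum_const, nsmul_eq_mul, mul_inv_cancel₀ hm]
    _ = ∏ w ∈ s, ((∫⁻ x, G x ∂μ) * ∫⁻ x, H w x ^ (s.card : ℝ) ∂μ) ^ (s.card : ℝ)⁻¹ := by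
        refine Finset.prod_congr rfl fun w hw => ?_
        rw [lintegral_apply_mul_apply_of_map_eq_prod (hν w hw) hG ((hH w hw).pow_const _)]
    _ = _ := ENNReal.prod_mul_rpow_inv_card hs _ _

theorem enorm_integral_apply_mul_prod_le_of_map_eq_prod {v : ι} {s : Finset ι}
    (hs : s.Nonempty) (hν : ∀ w ∈ s, ν.map (fun y => (y v, y w)) = μ.prod μ) {g : X → ℝ}
    {f : ι → X → ℝ} (hg : AEStronglyMeasurable g μ)
    (hf : ∀ w ∈ s, AEStronglyMeasurable (f w) μ) :
    ‖∫ y, g (y v) * ∏ w ∈ s, f w (y w) ∂ν‖ₑ ≤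
      (∫⁻ x, ‖g x‖ₑ ∂μ) * ∏ w ∈ s, eLpNorm (f w) s.card μ := by
  have hm : (s.card : ℝ≥0∞) ≠ 0 := by exact_mod_cast hs.card_pos.ne'
  calc ‖∫ y, g (y v) * ∏ w ∈ s, f w (y w) ∂ν‖ₑ
      ≤ ∫⁻ y, ‖g (y v)‖ₑ * ∏ w ∈ s, ‖f w (y w)‖ₑ ∂ν := by
        refine (enorm_integral_le_lintegral_enorm _).trans_eq (lintegral_congr fun y => ?_)
        rw [enorm_mul]
        simp only [enorm_eq_nnnorm, nnnorm_prod, ENNReal.ofNNReal_finsetProd]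
    _ ≤ _ := lintegral_apply_mul_prod_le_of_map_eq_prod hs hν hg.enorm fun w hw => (hf w hw).enorm
    _ = _ := by
        simp only [eLpNorm_eq_lintegral_rpow_enorm_toReal hm (ENNReal.natCast_ne_top _),
          ENNReal.toReal_natCast, one_div]

end CubeHolder

theorem dual_function_Linfty_bound_general
    {X : Type*} [MeasurableSpace X] (μ : Measure X) [IsProbabilityMeasure μ]
    (d : ℕ) (hd : 1 ≤ d)
    (μd : Measure ((Fin d → Bool) → X))
    (hmarg2 : ∀ ε θ : Fin d → Bool, ε ≠ θ →
      Measure.map (fun y : (Fin d → Bool) → X => (y ε, y θ)) μd = μ.prod μ)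
    (f : (Fin d → Bool) → X → ℝ) (hf : ∀ ε, MemLp (f ε) ⊤ μ)
    (F : X → ℝ) (hF : MemLp F 2 μ)
    (hdual : ∀ g : X → ℝ, MemLp g ⊤ μ →
      ∫ x, g x * F x ∂μ =
        ∫ y, g (y (vertex0 d)) *
          ∏ ε ∈ Finset.univ.filter (· ≠ vertex0 d), f ε (y ε) ∂μd) :
    eLpNorm F ⊤ μ ≤
      ∏ ε ∈ Finset.univ.filter (· ≠ vertex0 d),
        eLpNorm (f ε) ((2 ^ d - 1 : ℕ)) μ := by
  set s := Finset.univ.filter (· ≠ vertex0 d)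
  have hcard : s.card = 2 ^ d - 1 := by
    simp [s, Finset.filter_ne', Finset.card_erase_of_mem]
  have hs : s.Nonempty := by
    rw [← Finset.card_pos, hcard, Nat.sub_pos_iff_lt]
    exact Nat.one_lt_two_pow (by omega)
  rw [← hcard]
  refine eLpNorm_top_le_of_forall_enorm_integral_mul_le (hF.integrable one_le_two) fun g hg => ?_
  rw [hdual g hg]
  exact enorm_integral_apply_mul_prod_le_of_map_eq_prod hs
    (fun ε hε => hmarg2 _ _ (Finset.mem_filter.1 hε).2.symm) hg.1 fun ε _ => (hf ε).1

/-- Bound on the `L^∞` norm of the limit of cubic averages: if `F` is dual to the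
product `∏_{ε ≠ ∅} f_ε(x_ε)` with respect to the cubic measure `μ^[d]`, then
`‖F‖_∞ ≤ ∏_{ε ≠ ∅} ‖f_ε‖_{2^d − 1}`. -/
theorem dual_function_Linfty_bound
    {X : Type*} [MeasurableSpace X] (μ : Measure X) [IsProbabilityMeasure μ]
    (T : X → X) (hT : MeasurePreserving T μ μ) (herg : Ergodic T μ)
    (d : ℕ) (hd : 1 ≤ d)
    (μd : Measure ((Fin d → Bool) → X)) [IsProbabilityMeasure μd]
    (hmarg2 : ∀ ε θ : Fin d → Bool, ε ≠ θ →
      Measure.map (fun y : (Fin d → Bool) → X => (y ε, y θ)) μd = μ.prod μ)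
    (f : (Fin d → Bool) → X → ℝ) (hf : ∀ ε, MemLp (f ε) ⊤ μ)
    (F : X → ℝ) (hF : MemLp F 2 μ)
    (hdual : ∀ g : X → ℝ, MemLp g ⊤ μ →
      ∫ x, g x * F x ∂μ =
        ∫ y, g (y (vertex0 d)) *
          ∏ ε ∈ Finset.univ.filter (· ≠ vertex0 d), f ε (y ε) ∂μd) :
    eLpNorm F ⊤ μ ≤
      ∏ ε ∈ Finset.univ.filter (· ≠ vertex0 d),
        eLpNorm (f ε) ((2 ^ d - 1 : ℕ)) μ :=
  dual_function_Linfty_bound_general μ d hd μd hmarg2 f hf F hF hdual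
end
end

section
/- Let (X,μ,T) be an ergodic measure-preserving system, d ≥ 1, and A ⊆ X measurable. Let D_d 1_A denote the dual function of order d of 1_A, i.e. the L^2-limit of the averages N^{-d} Σ_{0 ≤ n₁,…,n_d < N} ∏_{∅≠ε⊆[d]} 1_A(T^{n·ε}x). Then D_d 1_A (x) > 0 for μ-almost every x ∈ A. -/
open Filter Topology MeasureTheory

noncomputable section

/-!
Let `B = A ∩ {D 1_A ≤ 0}`. Monotonicity squeezes `0 ≤ D 1_B ≤ D 1_A ≤ 0` on `B`, so
`s(1_B)^{2^d} = ∫ 1_B · D 1_B = 0`, and then `μ B = |∫ 1_B| ≤ s(1_B) = 0`.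
-/

theorem measure_eq_zero_of_abs_integral_indicator_one_nonpos {X : Type*} [MeasurableSpace X]
    {μ : Measure X} [IsFiniteMeasure μ] {B : Set X} (hB : MeasurableSet B)
    (h : |∫ x, B.indicator (fun _ => (1 : ℝ)) x ∂μ| ≤ 0) : μ B = 0 := by
  rwa [abs_nonpos_iff, integral_indicator_const _ hB, smul_eq_mul, mul_one,
    measureReal_eq_zero_iff] at h

section Monotone

variable {X : Type*} (D : Set X → X → ℝ)
  (hD : ∀ B C : Set X, B ⊆ C → ∀ x, 0 ≤ D B x ∧ D B x ≤ D C x)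
include hD

theorem eq_zero_of_subset_of_nonpos {A B : Set X} (hBA : B ⊆ A) {x : X} (hx : D A x ≤ 0) :
    D B x = 0 :=
  le_antisymm ((hD B A hBA x).2.trans hx) (hD B A hBA x).1

theorem integral_indicator_mul_eq_zero_of_monotone [MeasurableSpace X] (μ : Measure X)
    (A : Set X) :
    ∫ x, (A ∩ {x | D A x ≤ 0}).indicator (fun _ => (1 : ℝ)) x * D (A ∩ {x | D A x ≤ 0}) x ∂μ
      = 0 := by
  refine integral_eq_zero_of_ae (Eventually.of_forall fun x => ?_)
  by_cases hx : x ∈ A ∩ {x | D A x ≤ 0}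
  · simp [eq_zero_of_subset_of_nonpos D hD Set.inter_subset_left hx.2]
  · simp [hx]

end Monotone

theorem dual_function_pos_ae_general
    {X : Type*} [MeasurableSpace X] (μ : Measure X) [IsProbabilityMeasure μ]
    (d : ℕ)
    (D : Set X → X → ℝ) (s : Set X → ℝ)
    (hDmeas : ∀ B : Set X, Measurable (D B))
    (hii : ∀ B : Set X, MeasurableSet B →
      ∫ x, B.indicator (fun _ => (1 : ℝ)) x * D B x ∂μ = (s B) ^ (2 ^ d))
    (hiii : ∀ B : Set X, MeasurableSet B → |∫ x, B.indicator (fun _ => (1 : ℝ)) x ∂μ| ≤ s B)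
    (hiv : ∀ B C : Set X, B ⊆ C → ∀ x, 0 ≤ D B x ∧ D B x ≤ D C x)
    (A : Set X) (hA : MeasurableSet A) :
    ∀ᵐ x ∂μ, x ∈ A → 0 < D A x := by
  set B := A ∩ {x | D A x ≤ 0}
  have hB : MeasurableSet B := hA.inter (measurableSet_le (hDmeas A) measurable_const)
  have hsB : s B = 0 := (pow_eq_zero_iff (pow_pos two_pos d).ne').mp
    ((hii B hB).symm.trans (integral_indicator_mul_eq_zero_of_monotone D hiv μ A))
  have hμB : μ B = 0 := measure_eq_zero_of_abs_integral_indicator_one_nonpos hB (hsB ▸ hiii B hB)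
  filter_upwards [measure_eq_zero_iff_ae_notMem.mp hμB] with x hxB hxA
  exact not_le.mp fun hx => hxB ⟨hxA, hx⟩

/-- The dual function `D_d 1_A` is positive almost everywhere on `A`.
Here `D` denotes the dual-function operator on indicator functions and `s` the
`d`-th Gowers–Host–Kra seminorm, assumed to satisfy the standard facts:
`∫ 1_B · D 1_B dμ = s(1_B)^{2^d}`, `|∫ 1_B dμ| ≤ s(1_B)`, and monotonicity
`B ⊆ C → 0 ≤ D 1_B ≤ D 1_C`. -/
theorem dual_function_pos_ae
    {X : Type*} [MeasurableSpace X] (μ : Measure X) [IsProbabilityMeasure μ]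
    (T : X → X) (hT : MeasurePreserving T μ μ) (herg : Ergodic T μ)
    (d : ℕ) (hd : 1 ≤ d)
    (D : Set X → X → ℝ) (s : Set X → ℝ)
    (hDmeas : ∀ B : Set X, Measurable (D B))
    (hii : ∀ B : Set X, MeasurableSet B →
      ∫ x, B.indicator (fun _ => (1 : ℝ)) x * D B x ∂μ = (s B) ^ (2 ^ d))
    (hiii : ∀ B : Set X, MeasurableSet B → |∫ x, B.indicator (fun _ => (1 : ℝ)) x ∂μ| ≤ s B)
    (hiv : ∀ B C : Set X, B ⊆ C → ∀ x, 0 ≤ D B x ∧ D B x ≤ D C x)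
    (A : Set X) (hA : MeasurableSet A) :
    ∀ᵐ x ∂μ, x ∈ A → 0 < D A x :=
  dual_function_pos_ae_general μ d D s hDmeas hii hiii hiv A hA
end
end

section
/- Let (X,T) be a minimal topological dynamical system on a compact metric space and μ an invariant ergodic Borel probability measure on X. Then for every d ≥ 1, the cubic measure μ^[d] on X^{2^d} is concentrated on the set Q^[d](X) of dynamical parallelepipeds, i.e. μ^[d](Q^[d](X)) = 1. -/
open Filter Topology MeasureTheory

noncomputable section

/-! A point `z` off the closed set `Q^[d](X)` has a box neighbourhood missing `Q^[d](X)`, and a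
product of Urysohn functions for the sides of that box is positive at `z` and vanishes on
`Q^[d](X)`. Every orbit cube `(T^{n·ε} x)_ε` lies in `Q^[d](X)`, so the cubic averages of this
product vanish identically, hence so does its `μ^[d]`-integral; thus a neighbourhood of `z`
is `μ^[d]`-null. -/

theorem exists_continuous_prod_eq_zero_of_notMem {ι X : Type*} [Fintype ι] [TopologicalSpace X]
    [CompletelyRegularSpace X] {C : Set (ι → X)} (hC : IsClosed C) {z : ι → X} (hz : z ∉ C) :
    ∃ f : ι → C(X, ℝ), (∀ i x, 0 ≤ f i x) ∧ (∀ i, f i (z i) = 1) ∧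
      ∀ y ∈ C, ∏ i, f i (y i) = 0 := by
  obtain ⟨u, hu, hbox⟩ := isOpen_pi_iff'.mp hC.isOpen_compl z hz
  choose g hg hgz hgu using fun i =>
    CompletelyRegularSpace.completely_regular_isOpen (z i) (u i) (hu i).1 (hu i).2
  refine ⟨fun i => ⟨fun x => 1 - g i x, by fun_prop⟩, fun i x => sub_nonneg.2 (g i x).2.2,
    fun i => by simp [hgz], fun y hy => ?_⟩
  obtain ⟨i, hi⟩ : ∃ i, y i ∉ u i := by
    by_contra! h
    exact hbox (fun i _ => h i) hy
  exact Finset.prod_eq_zero (Finset.mem_univ i) (by simp [hgu i hi])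

theorem measure_compl_eq_zero_of_forall_notMem {Y : Type*} [TopologicalSpace Y]
    [SecondCountableTopology Y] [MeasurableSpace Y] (ν : Measure Y) {C : Set Y}
    (h : ∀ z ∉ C, ∃ g : Y → ℝ, Continuous g ∧ 0 ≤ g ∧ g z ≠ 0 ∧ Integrable g ν ∧
      ∫ y, g y ∂ν = 0) :
    ν Cᶜ = 0 := by
  refine measure_null_of_locally_null _ fun z hz => ?_
  obtain ⟨g, hg, hg0, hgz, hgi, hint⟩ := h z hz
  exact ⟨Function.support g, mem_nhdsWithin_of_mem_nhds (hg.isOpen_support.mem_nhds hgz),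
    Measure.measure_support_eq_zero_iff ν |>.2 <| (integral_eq_zero_iff_of_nonneg hg0 hgi).1 hint⟩

theorem measure_compl_eq_zero_of_integral_prod_eq_zero {ι X : Type*} [Fintype ι]
    [TopologicalSpace X] [CompactSpace X] [CompletelyRegularSpace X] [SecondCountableTopology X]
    [MeasurableSpace X] [OpensMeasurableSpace X] (ν : Measure (ι → X)) [IsFiniteMeasure ν]
    {C : Set (ι → X)} (hC : IsClosed C)
    (h : ∀ f : ι → C(X, ℝ), (∀ y ∈ C, ∏ i, f i (y i) = 0) → ∫ y, ∏ i, f i (y i) ∂ν = 0) :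
    ν Cᶜ = 0 := by
  refine measure_compl_eq_zero_of_forall_notMem ν fun z hz => ?_
  obtain ⟨f, hf0, hfz, hfC⟩ := exists_continuous_prod_eq_zero_of_notMem hC hz
  have hcont : Continuous fun y : ι → X => ∏ i, f i (y i) := by fun_prop
  exact ⟨_, hcont, fun y => Finset.prod_nonneg fun i _ => hf0 i (y i), by simp [hfz],
    hcont.integrable_of_hasCompactSupport (HasCompactSupport.of_compactSpace _), h f hfC⟩

theorem orbitCube_mem_cubeQ {X : Type*} [TopologicalSpace X] (T : X ≃ₜ X) {d : ℕ} (x : X)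
    (n : Fin d → ℤ) : (fun ε => (T.toEquiv ^ dotP n ε) x) ∈ cubeQ X T d :=
  subset_closure ⟨x, n, rfl⟩

theorem integral_prod_eq_zero_of_forall_cubeQ {X : Type*} [TopologicalSpace X]
    [MeasurableSpace X] (T : X ≃ₜ X) (μ : Measure X) {d : ℕ} (μd : Measure ((Fin d → Bool) → X))
    (f : (Fin d → Bool) → C(X, ℝ)) (hf : ∀ y ∈ cubeQ X T d, ∏ ε, f ε (y ε) = 0)
    (hlim : Tendsto (fun N : ℕ => (1 / (N : ℝ) ^ d) * ∑ n : Fin d → Fin N,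
          ∫ x, ∏ ε : Fin d → Bool,
            f ε ((T.toEquiv ^ dotP (fun i => ((n i : ℕ) : ℤ)) ε) x) ∂μ)
        atTop (nhds (∫ y, ∏ ε : Fin d → Bool, f ε (y ε) ∂μd))) :
    ∫ y, ∏ ε, f ε (y ε) ∂μd = 0 := by
  have hvanish (x : X) (n : Fin d → ℤ) : ∏ ε, f ε ((T.toEquiv ^ dotP n ε) x) = 0 :=
    hf _ (orbitCube_mem_cubeQ T x n)
  simp only [hvanish, integral_zero, Finset.sum_const_zero, mul_zero] at hlim
  exact tendsto_nhds_unique hlim tendsto_const_nhds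

theorem cubic_measure_concentrated_on_cubeQ_general
    {X : Type*} [MetricSpace X] [CompactSpace X] [MeasurableSpace X] [BorelSpace X]
    (T : X ≃ₜ X)
    (μ : Measure X)
    (d : ℕ)
    (μd : Measure ((Fin d → Bool) → X)) [IsProbabilityMeasure μd]
    (hchar : ∀ f : (Fin d → Bool) → C(X, ℝ),
      Tendsto (fun N : ℕ => (1 / (N : ℝ) ^ d) * ∑ n : Fin d → Fin N,
          ∫ x, ∏ ε : Fin d → Bool,
            f ε ((T.toEquiv ^ dotP (fun i => ((n i : ℕ) : ℤ)) ε) x) ∂μ)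
        atTop (nhds (∫ y, ∏ ε : Fin d → Bool, f ε (y ε) ∂μd))) :
    μd (cubeQ X T d) = 1 := by
  have hQ : IsClosed (cubeQ X T d) := isClosed_closure
  rw [← prob_compl_eq_zero_iff hQ.measurableSet]
  exact measure_compl_eq_zero_of_integral_prod_eq_zero μd hQ fun f hf =>
    integral_prod_eq_zero_of_forall_cubeQ T μ μd f hf (hchar f)

/-- The Host–Kra cubic measure `μ^[d]` of a minimal system with ergodic invariant
measure `μ` is concentrated on the set `Q^[d](X)` of dynamical parallelepipeds. -/
theorem cubic_measure_concentrated_on_cubeQ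
    {X : Type*} [MetricSpace X] [CompactSpace X] [MeasurableSpace X] [BorelSpace X]
    (T : X ≃ₜ X)
    (hmin : ∀ x : X, Dense (Set.range fun n : ℤ => (T.toEquiv ^ n) x))
    (μ : Measure X) [IsProbabilityMeasure μ]
    (hT : MeasurePreserving T μ μ) (herg : Ergodic T μ)
    (d : ℕ) (hd : 1 ≤ d)
    (μd : Measure ((Fin d → Bool) → X)) [IsProbabilityMeasure μd]
    (hchar : ∀ f : (Fin d → Bool) → C(X, ℝ),
      Tendsto (fun N : ℕ => (1 / (N : ℝ) ^ d) * ∑ n : Fin d → Fin N,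
          ∫ x, ∏ ε : Fin d → Bool,
            f ε ((T.toEquiv ^ dotP (fun i => ((n i : ℕ) : ℤ)) ε) x) ∂μ)
        atTop (nhds (∫ y, ∏ ε : Fin d → Bool, f ε (y ε) ∂μd))) :
    μd (cubeQ X T d) = 1 :=
  cubic_measure_concentrated_on_cubeQ_general T μ d μd hchar
end
end

section
/- Let (X,T) be a minimal system of order d−1 (i.e., any two points of Q^[d](X) agreeing in 2^d − 1 coordinates are equal) and μ an invariant ergodic measure on X. Then for every η > 0 there exists δ > 0 such that for every x ∈ X, the dual function D_d 1_{B(x,δ)} vanishes μ-almost everywhere on the complement of B(x,η). -/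
/-!
By compactness, the rigidity of `Q^[d](X)` (a cube is determined by its vertices other than
`vertex0`) becomes uniform: there is `δ > 0` such that whenever all vertices but `vertex0` of a
cube in `Q^[d](X)` lie in `B(x, δ)`, the vertex `vertex0` lies in `B(x, η)`. So for any test
function `g` vanishing on `B(x, η)`, the integrand on the cube side of the duality identity for
`B(x, δ)` vanishes on `Q^[d](X)`. Taking `g = 1_{B(x,η)ᶜ} / (1 + D_d 1_{B(x,δ)})` then forces
`D_d 1_{B(x,δ)} = 0` a.e. off `B(x, η)`.
-/

open Filter Topology MeasureTheory

noncomputable section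

section CubeRigidity

variable {X : Type*}

theorem const_mem_cubeQ [TopologicalSpace X] (T : X ≃ₜ X) (d : ℕ) (x : X) :
    (fun _ => x) ∈ cubeQ X T d :=
  subset_closure ⟨x, 0, by simp [dotP]⟩

theorem apply_vertex0_eq_of_forall_ne [TopologicalSpace X] {T : X ≃ₜ X} {d : ℕ}
    (horder : ∀ u ∈ cubeQ X T d, ∀ v ∈ cubeQ X T d,
      (∃ ε₀ : Fin d → Bool, ∀ ε : Fin d → Bool, ε ≠ ε₀ → u ε = v ε) → u = v)
    {x : X} {y : (Fin d → Bool) → X} (hy : y ∈ cubeQ X T d)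
    (hyx : ∀ ε, ε ≠ vertex0 d → y ε = x) : y (vertex0 d) = x :=
  (congrFun (horder _ (const_mem_cubeQ T d x) y hy ⟨vertex0 d, fun ε hε => (hyx ε hε).symm⟩)
    (vertex0 d)).symm

theorem exists_pos_forall_dist_lt_of_forall_ne_dist_lt [MetricSpace X] [CompactSpace X]
    {ι : Type*} [Fintype ι] [DecidableEq ι] {Q : Set (ι → X)} (hQ : IsClosed Q) (ε₀ : ι)
    (hrigid : ∀ x, ∀ y ∈ Q, (∀ ε, ε ≠ ε₀ → y ε = x) → y ε₀ = x) {η : ℝ} (hη : 0 < η) :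
    ∃ δ > 0, ∀ x, ∀ y ∈ Q, (∀ ε, ε ≠ ε₀ → dist (y ε) x < δ) → dist (y ε₀) x < η := by
  -- `spread p` is the sup-distance of the coordinates `p.2 ε`, `ε ≠ ε₀`, from `p.1`.
  let spread : X × (ι → X) → ℝ := fun p =>
    dist (fun ε => if ε = ε₀ then p.1 else p.2 ε) fun _ => p.1
  have hspread : Continuous spread :=
    (continuous_pi fun ε => by split_ifs <;> fun_prop).dist (by fun_prop)
  let K : Set (X × (ι → X)) := {p | p.2 ∈ Q ∧ η ≤ dist (p.2 ε₀) p.1}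
  have hK : IsCompact K := IsClosed.isCompact <| (hQ.preimage continuous_snd).inter <|
    isClosed_le continuous_const <| ((continuous_apply ε₀).comp continuous_snd).dist continuous_fst
  have hpos : ∀ p ∈ K, 0 < spread p := by
    rintro ⟨x, y⟩ ⟨hyQ, hfar⟩
    refine dist_nonneg.lt_of_ne fun h => ?_
    have hyx : ∀ ε, ε ≠ ε₀ → y ε = x := fun ε hε => by
      simpa [hε] using congrFun (dist_eq_zero.mp h.symm) ε
    simp only [hrigid x y hyQ hyx, dist_self] at hfar
    linarith
  obtain ⟨δ, hδ, hδK⟩ := hK.exists_forall_le' hspread.continuousOn hpos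
  refine ⟨δ, hδ, fun x y hyQ hclose => not_le.mp fun hfar => ?_⟩
  have hlt : spread (x, y) < δ := (dist_pi_lt_iff hδ).mpr fun ε => by
    by_cases hε : ε = ε₀ <;> simp [hε, hδ, hclose]
  exact (hδK (x, y) ⟨hyQ, hfar⟩).not_gt hlt

end CubeRigidity

section TestFunction

variable {α : Type*} {f : α → ℝ} {E : Set α}

theorem measurable_indicator_inv_one_add [MeasurableSpace α] (hf : Measurable f)
    (hE : MeasurableSet E) :
    Measurable (E.indicator fun z => (1 + f z)⁻¹) :=
  (measurable_const.add hf).inv.indicator hE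

theorem abs_indicator_inv_one_add_le_one (hf : 0 ≤ f) (z : α) :
    |E.indicator (fun z => (1 + f z)⁻¹) z| ≤ 1 := by
  by_cases hz : z ∈ E
  · rw [Set.indicator_of_mem hz,
      abs_of_pos (inv_pos.mpr (add_pos_of_pos_of_nonneg one_pos (hf z)))]
    exact inv_le_one_of_one_le₀ (le_add_of_nonneg_right (hf z))
  · simp [hz]

/-- `f / (1 + f)` is bounded, so this works even when `f` is not integrable. -/
theorem ae_eq_zero_of_integral_indicator_inv_one_add_mul_eq_zero [MeasurableSpace α]
    {μ : Measure α} [IsFiniteMeasure μ] (hf : Measurable f) (hf0 : 0 ≤ f) (hE : MeasurableSet E)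
    (h : ∫ z, E.indicator (fun z => (1 + f z)⁻¹) z * f z ∂μ = 0) :
    ∀ᵐ z ∂μ, z ∈ E → f z = 0 := by
  set F : α → ℝ := fun z => E.indicator (fun z => (1 + f z)⁻¹) z * f z
  have hinv_pos : ∀ z, 0 < (1 + f z)⁻¹ := fun z =>
    inv_pos.mpr (add_pos_of_pos_of_nonneg one_pos (hf0 z))
  have hF0 : 0 ≤ F := fun z =>
    mul_nonneg (Set.indicator_nonneg (fun z _ => (hinv_pos z).le) z) (hf0 z)
  have hF1 : ∀ z, ‖F z‖ ≤ 1 := fun z => by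
    rw [Real.norm_eq_abs, abs_of_nonneg (hF0 z)]
    by_cases hz : z ∈ E
    · simp only [F, Set.indicator_of_mem hz]
      rw [inv_mul_le_iff₀ (add_pos_of_pos_of_nonneg one_pos (hf0 z))]
      linarith
    · simp [F, hz]
  have hFint : Integrable F μ :=
    .of_bound ((measurable_indicator_inv_one_add hf hE).mul hf).aestronglyMeasurable 1
      (ae_of_all _ hF1)
  filter_upwards [(integral_eq_zero_iff_of_nonneg hF0 hFint).mp h] with z hz hzE
  simpa [F, Set.indicator_of_mem hzE, (hinv_pos z).ne'] using hz

end TestFunction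

theorem mul_prod_indicator_ball_eq_zero {ι X : Type*} [Fintype ι] [DecidableEq ι]
    [PseudoMetricSpace X] {ε₀ : ι} {x : X} {y : ι → X} {δ η : ℝ}
    (hy : (∀ ε, ε ≠ ε₀ → dist (y ε) x < δ) → dist (y ε₀) x < η) {g : X → ℝ}
    (hg : ∀ z ∈ Metric.ball x η, g z = 0) :
    g (y ε₀) * ∏ ε ∈ Finset.univ.filter (· ≠ ε₀),
      (Metric.ball x δ).indicator (fun _ => (1 : ℝ)) (y ε) = 0 := by
  by_cases hclose : ∀ ε, ε ≠ ε₀ → dist (y ε) x < δ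
  · rw [hg _ (hy hclose), zero_mul]
  · obtain ⟨ε, hε, hfar⟩ := not_forall₂.mp hclose
    exact mul_eq_zero_of_right _ <|
      Finset.prod_eq_zero (by simpa using hε)
        (Set.indicator_of_notMem (mt Metric.mem_ball.mp hfar) _)

theorem dual_function_vanishes_off_ball_general
    {X : Type*} [MetricSpace X] [CompactSpace X] [MeasurableSpace X] [BorelSpace X]
    (T : X ≃ₜ X)
    (μ : Measure X) [IsProbabilityMeasure μ]
    (d : ℕ)
    (horder : ∀ u ∈ cubeQ X T d, ∀ v ∈ cubeQ X T d,
      (∃ ε₀ : Fin d → Bool, ∀ ε : Fin d → Bool, ε ≠ ε₀ → u ε = v ε) → u = v)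
    (μd : Measure ((Fin d → Bool) → X)) [IsProbabilityMeasure μd]
    (hQd : μd (cubeQ X T d) = 1)
    (D : Set X → X → ℝ)
    (hDmeas : ∀ B : Set X, Measurable (D B))
    (hDpos : ∀ (B : Set X) (x : X), 0 ≤ D B x)
    (hdual : ∀ B : Set X, MeasurableSet B → ∀ g : X → ℝ, Measurable g →
      (∃ C : ℝ, ∀ x, |g x| ≤ C) →
      ∫ x, g x * D B x ∂μ =
        ∫ y, g (y (vertex0 d)) *
          ∏ ε ∈ Finset.univ.filter (· ≠ vertex0 d),
            B.indicator (fun _ => (1 : ℝ)) (y ε) ∂μd) :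
    ∀ η > (0 : ℝ), ∃ δ > (0 : ℝ), ∀ x : X,
      ∀ᵐ z ∂μ, z ∉ Metric.ball x η → D (Metric.ball x δ) z = 0 := by
  intro η hη
  obtain ⟨δ, hδ, hrigid⟩ := exists_pos_forall_dist_lt_of_forall_ne_dist_lt isClosed_closure
    (vertex0 d) (fun x y hy hyx => apply_vertex0_eq_of_forall_ne horder hy hyx) hη
  refine ⟨δ, hδ, fun x => ?_⟩
  set E := (Metric.ball x η)ᶜ
  set g := E.indicator fun z => (1 + D (Metric.ball x δ) z)⁻¹
  have hcube : ∀ᵐ y ∂μd, y ∈ cubeQ X T d :=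
    (mem_ae_iff_prob_eq_one isClosed_closure.measurableSet).mpr hQd
  have hvanish : ∫ z, g z * D (Metric.ball x δ) z ∂μ = 0 := by
    rw [hdual _ Metric.isOpen_ball.measurableSet g
      (measurable_indicator_inv_one_add (hDmeas _) Metric.isOpen_ball.measurableSet.compl)
      ⟨1, abs_indicator_inv_one_add_le_one (hDpos _)⟩]
    refine integral_eq_zero_of_ae (hcube.mono fun y hy => ?_)
    exact mul_prod_indicator_ball_eq_zero (hrigid x y hy)
      fun z hz => Set.indicator_of_notMem (not_not.mpr hz) _
  exact ae_eq_zero_of_integral_indicator_inv_one_add_mul_eq_zero (hDmeas _) (hDpos _)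
    Metric.isOpen_ball.measurableSet.compl hvanish

/-- In a minimal system of order `d−1` with ergodic invariant measure `μ`, for every
`η > 0` there is `δ > 0` such that for every `x` the dual function `D_d 1_{B(x,δ)}`
vanishes `μ`-a.e. off `B(x,η)`. Here `D B` denotes the dual function of order `d`
of the indicator of `B`, assumed nonnegative, measurable, and satisfying the duality
identity with the cubic measure `μ^[d]`, which is concentrated on `Q^[d](X)`. -/
theorem dual_function_vanishes_off_ball
    {X : Type*} [MetricSpace X] [CompactSpace X] [MeasurableSpace X] [BorelSpace X]
    (T : X ≃ₜ X)
    (hmin : ∀ x : X, Dense (Set.range fun n : ℤ => (T.toEquiv ^ n) x))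
    (μ : Measure X) [IsProbabilityMeasure μ]
    (hT : MeasurePreserving T μ μ) (herg : Ergodic T μ)
    (d : ℕ) (hd : 1 ≤ d)
    (horder : ∀ u ∈ cubeQ X T d, ∀ v ∈ cubeQ X T d,
      (∃ ε₀ : Fin d → Bool, ∀ ε : Fin d → Bool, ε ≠ ε₀ → u ε = v ε) → u = v)
    (μd : Measure ((Fin d → Bool) → X)) [IsProbabilityMeasure μd]
    (hQd : μd (cubeQ X T d) = 1)
    (D : Set X → X → ℝ)
    (hDmeas : ∀ B : Set X, Measurable (D B))
    (hDpos : ∀ (B : Set X) (x : X), 0 ≤ D B x)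
    (hdual : ∀ B : Set X, MeasurableSet B → ∀ g : X → ℝ, Measurable g →
      (∃ C : ℝ, ∀ x, |g x| ≤ C) →
      ∫ x, g x * D B x ∂μ =
        ∫ y, g (y (vertex0 d)) *
          ∏ ε ∈ Finset.univ.filter (· ≠ vertex0 d),
            B.indicator (fun _ => (1 : ℝ)) (y ε) ∂μd) :
    ∀ η > (0 : ℝ), ∃ δ > (0 : ℝ), ∀ x : X,
      ∀ᵐ z ∂μ, z ∉ Metric.ball x η → D (Metric.ball x δ) z = 0 :=
  dual_function_vanishes_off_ball_general T μ d horder μd hQd D hDmeas hDpos hdual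
end
end
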